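/- arXiv:1208.2484 — 5 statements merged into one kernel-verified Lean document; each statement's English description precedes it below -/
import Mathlib

section
/- There exist a positive integer m and constants 0 < C₁ ≤ C₂ (depending only on n) such that the Heisenberg group H^n admits a Heisenberg dyadic grid with parameters (m, C₁, C₂): that is, a family of Borel sets S_{j,α,τ} ⊆ H^n, indexed by j ∈ mℤ and (α,τ) ∈ K_j := 2^j ℤ^{2n} × 2^{2j} ℤ, such that (i) for each j ∈ mℤ, H^n is the pairwise disjoint union of {S_{j,α,τ} : (α,τ) ∈ K_j}; (ii) the orthogonal projection of S_{j,α,τ} onto C^n is the dyadic cube I_α^j = α + [0,2^j)^{2n}; (iii) B_ρ(c_{j,α,τ}, C₁ 2^j) ⊆ S_{j,α,τ} ⊆ B_ρ(c_{j,α,τ}, C₂ 2^j), where c_{j,α,τ} = (P_{j,α}, τ + 2^{2j−1}) and P_{j,α} is the center of I_α^j; and (iv) any two members of the family are either disjoint or one contains the other. -/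
open MeasureTheory Complex
open scoped ENNReal

noncomputable section

/-- The underlying space of the Heisenberg group `ℍⁿ = ℂⁿ × ℝ`. -/
abbrev Heis (n : ℕ) := (Fin n → ℂ) × ℝ

/-- Heisenberg group multiplication `(z,u)∘(w,v) = (z+w, u+v+2 Im (z·w̄))`. -/
def Hmul {n : ℕ} (p q : Heis n) : Heis n :=
  (p.1 + q.1, p.2 + q.2 + 2 * (∑ j : Fin n, p.1 j * (starRingEnd ℂ) (q.1 j)).im)

/-- Heisenberg group inverse. -/
def Hinv {n : ℕ} (p : Heis n) : Heis n := (-p.1, -p.2)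

/-- The homogeneous norm `ρ(z,u) = (|z|⁴ + u²)^{1/4}`. -/
def hNorm {n : ℕ} (p : Heis n) : ℝ :=
  ((∑ j : Fin n, Complex.normSq (p.1 j)) ^ 2 + p.2 ^ 2) ^ ((1 : ℝ) / 4)

/-- The quasidistance `d(p,q) = ρ(p ∘ q⁻¹)`. -/
def hDist {n : ℕ} (p q : Heis n) : ℝ := hNorm (Hmul p (Hinv q))

/-- Quasimetric balls `B_ρ(c,r)`. -/
def hBall {n : ℕ} (c : Heis n) (r : ℝ) : Set (Heis n) := {p | hDist c p < r}

/-- The dyadic cube `I_α^j = α + [0,2^j)^{2n}` in `ℂⁿ`, where `α = 2^j a`. -/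
def dyadicCube (n : ℕ) (j : ℤ) (a : Fin n → ℤ × ℤ) : Set (Fin n → ℂ) :=
  {z | ∀ k : Fin n,
    ((2:ℝ)^j * ((a k).1 : ℝ) ≤ (z k).re ∧ (z k).re < (2:ℝ)^j * ((a k).1 : ℝ) + (2:ℝ)^j) ∧
    ((2:ℝ)^j * ((a k).2 : ℝ) ≤ (z k).im ∧ (z k).im < (2:ℝ)^j * ((a k).2 : ℝ) + (2:ℝ)^j)}

/-- The center `P_{j,α}` of the dyadic cube `I_α^j`. -/
def cubeCenter (n : ℕ) (j : ℤ) (a : Fin n → ℤ × ℤ) : Fin n → ℂ :=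
  fun k => (((2:ℝ)^j * ((a k).1 : ℝ) + (2:ℝ)^(j-1) : ℝ) : ℂ) +
    (((2:ℝ)^j * ((a k).2 : ℝ) + (2:ℝ)^(j-1) : ℝ) : ℂ) * Complex.I

/-- The center `c_{j,α,τ} = (P_{j,α}, τ + 2^{2j-1})`, where `τ = 2^{2j} t`. -/
def gridCenter (n : ℕ) (j : ℤ) (a : Fin n → ℤ × ℤ) (t : ℤ) : Heis n :=
  (cubeCenter n j a, (2:ℝ)^(2*j) * (t : ℝ) + (2:ℝ)^(2*j-1))

/-- A Heisenberg dyadic grid with parameters `(m, C₁, C₂)`:  a family of Borel sets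
`S_{j,α,τ} ⊆ ℍⁿ` indexed by `j ∈ mℤ` and `(α,τ) ∈ 2^jℤ^{2n} × 2^{2j}ℤ` such that
(i) for each `j ∈ mℤ` the family is a pairwise disjoint cover of `ℍⁿ`;
(ii) the projection of `S_{j,α,τ}` to `ℂⁿ` is the dyadic cube `I_α^j`;
(iii) `B_ρ(c_{j,α,τ}, C₁2^j) ⊆ S_{j,α,τ} ⊆ B_ρ(c_{j,α,τ}, C₂2^j)`;
(iv) any two members are nested or disjoint. -/
structure HeisGrid (n m : ℕ) (C₁ C₂ : ℝ) where
  S : ℤ → (Fin n → ℤ × ℤ) → ℤ → Set (Heis n)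
  measurableSet_S : ∀ j a t, MeasurableSet (S j a t)
  existsUnique_mem : ∀ j : ℤ, (m : ℤ) ∣ j → ∀ p : Heis n,
    ∃! c : (Fin n → ℤ × ℤ) × ℤ, p ∈ S j c.1 c.2
  proj_eq : ∀ j : ℤ, (m : ℤ) ∣ j → ∀ a t, Prod.fst '' S j a t = dyadicCube n j a
  ball_subset : ∀ j : ℤ, (m : ℤ) ∣ j → ∀ a t,
    hBall (gridCenter n j a t) (C₁ * (2:ℝ)^j) ⊆ S j a t
  subset_ball : ∀ j : ℤ, (m : ℤ) ∣ j → ∀ a t,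
    S j a t ⊆ hBall (gridCenter n j a t) (C₂ * (2:ℝ)^j)
  nested : ∀ j j' : ℤ, (m : ℤ) ∣ j → (m : ℤ) ∣ j' → ∀ a a' t t',
    S j a t ⊆ S j' a' t' ∨ S j' a' t' ⊆ S j a t ∨ Disjoint (S j a t) (S j' a' t')


/-!
A point `(z, u)` goes to the scale-`j` cell given by the dyadic cube of `z` and the integer part
of `(u + φⱼ(z)) / 4ʲ`. The vertical coordinate of `(P, s) ∘ (z, u)⁻¹` is `s - u - ψⱼ(z)`, where
`ψⱼ(z) = 2 Im ⟨P, z⟩` for the centre `P` of the cube, so `φⱼ = ψⱼ` would put every cell between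
two balls around its centre; but cells of different scales would not be nested. Instead
`φⱼ = ∑ₖ Δ_{j-km}`, where `Δⱼ` is `ψⱼ - ψ_{j-m}` evaluated at the centre of the scale-`(j-m)`
cube and rounded down to a multiple of `4^{j-m}`. Then `φ_{j+m} - φⱼ` is a multiple of `4ʲ` that
is constant on scale-`j` cubes, so the cells are nested, and the rounding errors telescope to
`|φⱼ - ψⱼ| ≤ 2(4n+1) 2⁻ᵐ 4ʲ ≤ 4ʲ / 4` once `2ᵐ ≥ 8(4n+1)`, which preserves the ball inclusions.
-/

section

open ComplexConjugate

theorem Int.floor_div_eq_iff {K : Type*} [Field K] [LinearOrder K] [IsOrderedRing K] [FloorRing K]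
    {x c : K} (hc : 0 < c) {a : ℤ} : ⌊x / c⌋ = a ↔ c * a ≤ x ∧ x < c * a + c := by
  rw [Int.floor_eq_iff, le_div_iff₀ hc, div_lt_iff₀ hc, add_one_mul, mul_comm (a : K) c]

theorem abs_mul_floor_div_sub_le {K : Type*} [Field K] [LinearOrder K] [IsOrderedRing K]
    [FloorRing K] (x : K) {c : K} (hc : 0 < c) : |c * ⌊x / c⌋ - x| ≤ c := by
  obtain ⟨h₁, h₂⟩ := (Int.floor_div_eq_iff (x := x) hc).mp rfl
  rw [abs_le]
  constructor <;> linarith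

theorem floor_add_mul_div_two_zpow (x : ℝ) (i : ℤ) (M : ℕ) (d : ℤ) :
    ⌊(x + 2 ^ i * d) / 2 ^ (i + M)⌋ = (⌊x / 2 ^ i⌋ + d) / (2 ^ M : ℕ) := by
  have h2i : (2 : ℝ) ^ i ≠ 0 := by positivity
  rw [zpow_add₀ two_ne_zero, zpow_natCast, ← div_div, add_div, mul_div_cancel_left₀ _ h2i,
    ← Int.floor_add_intCast, ← Int.floor_div_natCast]
  push_cast
  rfl

theorem Set.preimage_singleton_subset_or_disjoint {X Y Z : Type*} {f : X → Y} {g : X → Z}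
    (h : ∀ x y, f x = f y → g x = g y) (a : Y) (b : Z) :
    f ⁻¹' {a} ⊆ g ⁻¹' {b} ∨ Disjoint (f ⁻¹' {a}) (g ⁻¹' {b}) := by
  rw [or_iff_not_imp_right, Set.not_disjoint_iff]
  rintro ⟨x, hxa, hxb⟩ y hya
  exact (h y x ((show f y = a from hya).trans hxa.symm)).trans hxb

theorem hasSum_sub_succ {ψ : ℕ → ℝ} (hψ : Summable ψ) :
    HasSum (fun k => ψ k - ψ (k + 1)) (ψ 0) := by
  simpa using hψ.hasSum.sub ((hasSum_nat_add_iff' 1).mpr hψ.hasSum)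

theorem summable_of_abs_sub_sub_succ_le {D ψ e : ℕ → ℝ} (hψ : Summable ψ) (he : Summable e)
    (hD : ∀ k, |D k - (ψ k - ψ (k + 1))| ≤ e k) : Summable D := by
  simpa using (Summable.of_norm_bounded he hD).add (hasSum_sub_succ hψ).summable

theorem abs_tsum_sub_le_of_abs_sub_sub_succ_le {D ψ e : ℕ → ℝ} (hψ : Summable ψ)
    (he : Summable e) (hD : ∀ k, |D k - (ψ k - ψ (k + 1))| ≤ e k) :
    |∑' k, D k - ψ 0| ≤ ∑' k, e k := by
  rw [← (hasSum_sub_succ hψ).tsum_eq,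
    ← (summable_of_abs_sub_sub_succ_le hψ he hD).tsum_sub (hasSum_sub_succ hψ).summable]
  exact tsum_of_norm_bounded he.hasSum fun k => (Real.norm_eq_abs _).trans_le (hD k)

theorem abs_im_sum_mul_conj_le {ι : Type*} (s : Finset ι) (a b : ι → ℂ) :
    |(∑ k ∈ s, a k * conj (b k)).im| ≤ ∑ k ∈ s, ‖a k‖ * ‖b k‖ := by
  rw [Complex.im_sum]
  refine (Finset.abs_sum_le_sum_abs _ _).trans (Finset.sum_le_sum fun k _ => ?_)
  simpa using Complex.abs_im_le_norm (a k * conj (b k))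

theorem two_zpow_sub_one (j : ℤ) : (2 : ℝ) ^ (j - 1) = 2 ^ j / 2 := by
  rw [zpow_sub_one₀ two_ne_zero, div_eq_mul_inv]

theorem two_zpow_two_mul (j : ℤ) : (2 : ℝ) ^ (2 * j) = (2 ^ j) ^ 2 := by
  rw [two_mul, zpow_add₀ two_ne_zero, sq]

theorem two_zpow_sub_natCast (a : ℤ) (k : ℕ) : (2 : ℝ) ^ (a - k) = 2 ^ a * (1 / 2) ^ k := by
  rw [zpow_sub₀ two_ne_zero, zpow_natCast, one_div_pow, mul_one_div]

variable {n : ℕ}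

def cubeIndex (n : ℕ) (j : ℤ) (z : Fin n → ℂ) : Fin n → ℤ × ℤ :=
  fun k => (⌊(z k).re / 2 ^ j⌋, ⌊(z k).im / 2 ^ j⌋)

def cubeCenterOf (n : ℕ) (j : ℤ) (z : Fin n → ℂ) : Fin n → ℂ := cubeCenter n j (cubeIndex n j z)

theorem cubeCenter_re (j : ℤ) (a : Fin n → ℤ × ℤ) (k : Fin n) :
    (cubeCenter n j a k).re = 2 ^ j * (a k).1 + 2 ^ (j - 1) := by
  simp only [cubeCenter, Complex.add_re, Complex.ofReal_re, Complex.mul_re, Complex.I_re,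
    Complex.I_im, Complex.ofReal_im]
  ring

theorem cubeCenter_im (j : ℤ) (a : Fin n → ℤ × ℤ) (k : Fin n) :
    (cubeCenter n j a k).im = 2 ^ j * (a k).2 + 2 ^ (j - 1) := by
  simp only [cubeCenter, Complex.add_im, Complex.ofReal_re, Complex.mul_im, Complex.I_re,
    Complex.I_im, Complex.ofReal_im]
  ring

theorem mem_dyadicCube_iff {j : ℤ} {a : Fin n → ℤ × ℤ} {z : Fin n → ℂ} :
    z ∈ dyadicCube n j a ↔ cubeIndex n j z = a := by
  simp only [dyadicCube, Set.mem_ofPred_eq, funext_iff, cubeIndex, Prod.ext_iff,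
    Int.floor_div_eq_iff (zpow_pos (two_pos : (0 : ℝ) < 2) j)]

theorem mem_dyadicCube_cubeIndex (j : ℤ) (z : Fin n → ℂ) :
    z ∈ dyadicCube n j (cubeIndex n j z) :=
  mem_dyadicCube_iff.mpr rfl

theorem norm_cubeCenter_sub_le {j : ℤ} {a : Fin n → ℤ × ℤ} {z : Fin n → ℂ}
    (hz : z ∈ dyadicCube n j a) (k : Fin n) : ‖cubeCenter n j a k - z k‖ ≤ 2 ^ j := by
  obtain ⟨⟨hre₁, hre₂⟩, him₁, him₂⟩ := hz k
  have hre : |(cubeCenter n j a k - z k).re| ≤ 2 ^ j / 2 := by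
    rw [Complex.sub_re, cubeCenter_re, two_zpow_sub_one, abs_le]; constructor <;> linarith
  have him : |(cubeCenter n j a k - z k).im| ≤ 2 ^ j / 2 := by
    rw [Complex.sub_im, cubeCenter_im, two_zpow_sub_one, abs_le]; constructor <;> linarith
  linarith [Complex.norm_le_abs_re_add_abs_im (cubeCenter n j a k - z k)]

theorem mem_dyadicCube_of_norm_sub_lt {j : ℤ} {a : Fin n → ℤ × ℤ} {z : Fin n → ℂ}
    (h : ∀ k, ‖cubeCenter n j a k - z k‖ < 2 ^ j / 2) : z ∈ dyadicCube n j a := by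
  intro k
  have hre := abs_lt.mp ((Complex.abs_re_le_norm _).trans_lt (h k))
  have him := abs_lt.mp ((Complex.abs_im_le_norm _).trans_lt (h k))
  rw [Complex.sub_re, cubeCenter_re, two_zpow_sub_one] at hre
  rw [Complex.sub_im, cubeCenter_im, two_zpow_sub_one] at him
  refine ⟨⟨?_, ?_⟩, ?_, ?_⟩ <;> linarith [hre.1, hre.2, him.1, him.2]

theorem cubeIndex_cubeCenter (j : ℤ) (a : Fin n → ℤ × ℤ) :
    cubeIndex n j (cubeCenter n j a) = a :=
  mem_dyadicCube_iff.mp (mem_dyadicCube_of_norm_sub_lt fun k => by simp [zpow_pos])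

theorem cubeIndex_eq_of_le {i j : ℤ} (hij : i ≤ j) {z w : Fin n → ℂ}
    (h : cubeIndex n i z = cubeIndex n i w) : cubeIndex n j z = cubeIndex n j w := by
  obtain ⟨M, rfl⟩ := Int.le.dest hij
  have hfloor (x : ℝ) : ⌊x / 2 ^ (i + M)⌋ = ⌊x / 2 ^ i⌋ / (2 ^ M : ℕ) := by
    simpa using floor_add_mul_div_two_zpow x i M 0
  funext k
  have hk := congrFun h k
  simp only [cubeIndex, Prod.ext_iff] at hk ⊢
  simp only [hfloor, hk, and_self]

theorem cubeCenterOf_cubeCenterOf_of_le {i j : ℤ} (hij : i ≤ j) (z : Fin n → ℂ) :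
    cubeCenterOf n j (cubeCenterOf n i z) = cubeCenterOf n j z := by
  unfold cubeCenterOf
  rw [cubeIndex_eq_of_le hij (cubeIndex_cubeCenter i _)]

theorem norm_cubeCenterOf_sub_le (j : ℤ) (z : Fin n → ℂ) (k : Fin n) : ‖cubeCenterOf n j z k - z k‖ ≤ 2 ^ j :=
  norm_cubeCenter_sub_le (mem_dyadicCube_cubeIndex j z) k

theorem measurable_cubeIndex (j : ℤ) : Measurable (cubeIndex n j) := by
  refine measurable_pi_lambda _ fun k => Measurable.prodMk ?_ ?_
  · exact ((Complex.measurable_re.comp (measurable_pi_apply k)).div_const _).floor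
  · exact ((Complex.measurable_im.comp (measurable_pi_apply k)).div_const _).floor

theorem hDist_lt_iff {c p : Heis n} {r : ℝ} (hr : 0 < r) :
    hDist c p < r ↔ (∑ k, Complex.normSq (c.1 k - p.1 k)) ^ 2
      + (c.2 - p.2 - 2 * (∑ k, c.1 k * conj (p.1 k)).im) ^ 2 < r ^ 4 := by
  have hmul : Hmul c (Hinv p) = (c.1 - p.1, c.2 - p.2 - 2 * (∑ k, c.1 k * conj (p.1 k)).im) := by
    simp [Hmul, Hinv, sub_eq_add_neg]
  rw [hDist, hmul, hNorm, one_div, Real.rpow_inv_lt_iff_of_pos (by positivity) hr.le four_pos]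
  norm_cast

def shear (n : ℕ) (j : ℤ) (z : Fin n → ℂ) : ℝ := 2 * (∑ k, cubeCenterOf n j z k * conj (z k)).im

theorem shear_eq_of_cubeIndex_eq {j : ℤ} {a : Fin n → ℤ × ℤ} {z : Fin n → ℂ}
    (h : cubeIndex n j z = a) : shear n j z = 2 * (∑ k, cubeCenter n j a k * conj (z k)).im := by
  rw [shear, cubeCenterOf, h]

theorem abs_shear_le (j : ℤ) (z : Fin n → ℂ) : |shear n j z| ≤ 2 * 2 ^ j * ∑ k, ‖z k‖ := by
  have hself : (∑ k, z k * conj (z k)).im = 0 := by simp [Complex.mul_conj]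
  have hshift : shear n j z = 2 * (∑ k, (cubeCenterOf n j z k - z k) * conj (z k)).im := by
    simp only [shear, sub_mul, Finset.sum_sub_distrib, Complex.sub_im, hself, sub_zero]
  rw [hshift, abs_mul, abs_two, mul_assoc, Finset.mul_sum]
  gcongr
  refine (abs_im_sum_mul_conj_le _ _ _).trans (Finset.sum_le_sum fun k _ => ?_)
  gcongr
  exact norm_cubeCenterOf_sub_le j z k

def increment (n : ℕ) (i j : ℤ) (z : Fin n → ℂ) : ℝ :=
  2 ^ (2 * i) * ⌊(shear n j (cubeCenterOf n i z) - shear n i (cubeCenterOf n i z)) / 2 ^ (2 * i)⌋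

theorem shear_cubeCenterOf_sub_shear_sub {i j : ℤ} (hij : i ≤ j) (z : Fin n → ℂ) :
    (shear n j (cubeCenterOf n i z) - shear n i (cubeCenterOf n i z)) - (shear n j z - shear n i z)
      = 2 * (∑ k, (cubeCenterOf n j z k - cubeCenterOf n i z k)
          * conj (cubeCenterOf n i z k - z k)).im := by
  simp only [shear, cubeCenterOf_cubeCenterOf_of_le hij, cubeCenterOf_cubeCenterOf_of_le le_rfl]
  simp only [mul_sub, sub_mul, map_sub, Finset.sum_sub_distrib, Complex.sub_im]

theorem abs_increment_sub_le {i j : ℤ} (hij : i ≤ j) (z : Fin n → ℂ) :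
    |increment n i j z - (shear n j z - shear n i z)| ≤ (4 * n + 1) * (2 ^ i * 2 ^ j) := by
  set w := cubeCenterOf n i z
  have hround : |increment n i j z - (shear n j w - shear n i w)| ≤ 2 ^ i * 2 ^ j := by
    refine (abs_mul_floor_div_sub_le _ (by positivity)).trans ?_
    rw [two_mul, zpow_add₀ two_ne_zero]
    gcongr
    norm_num
  have hterm (k : Fin n) : ‖cubeCenterOf n j z k - w k‖ * ‖w k - z k‖ ≤ 2 * (2 ^ i * 2 ^ j) := by
    have hcw : ‖cubeCenterOf n j z k - w k‖ ≤ 2 ^ j + 2 ^ i := by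
      calc ‖cubeCenterOf n j z k - w k‖ ≤ ‖cubeCenterOf n j z k - z k‖ + ‖w k - z k‖ := by
            simpa only [dist_eq_norm] using dist_triangle_right _ (w k) (z k)
        _ ≤ 2 ^ j + 2 ^ i :=
            add_le_add (norm_cubeCenterOf_sub_le j z k) (norm_cubeCenterOf_sub_le i z k)
    have hwz := norm_cubeCenterOf_sub_le i z k
    have hij' := zpow_le_zpow_right₀ (one_le_two : (1 : ℝ) ≤ 2) hij
    have := zpow_pos (two_pos : (0 : ℝ) < 2) i
    nlinarith [norm_nonneg (cubeCenterOf n j z k - w k), norm_nonneg (w k - z k)]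
  have hshift : |(shear n j w - shear n i w) - (shear n j z - shear n i z)|
      ≤ 4 * n * (2 ^ i * 2 ^ j) := by
    rw [shear_cubeCenterOf_sub_shear_sub hij, abs_mul, abs_two]
    calc 2 * |(∑ k, (cubeCenterOf n j z k - w k) * conj (w k - z k)).im|
        ≤ 2 * ∑ _k : Fin n, 2 * (2 ^ i * 2 ^ j) := by
          gcongr
          exact (abs_im_sum_mul_conj_le _ _ _).trans (Finset.sum_le_sum fun k _ => hterm k)
      _ = 4 * n * (2 ^ i * 2 ^ j) := by simp; ring
  linarith [abs_sub_le (increment n i j z) (shear n j w - shear n i w) (shear n j z - shear n i z)]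

theorem measurable_increment (i j : ℤ) : Measurable (increment n i j) :=
  (measurable_of_countable fun a : Fin n → ℤ × ℤ => (2 : ℝ) ^ (2 * i) *
    ⌊(shear n j (cubeCenter n i a) - shear n i (cubeCenter n i a)) / 2 ^ (2 * i)⌋).comp
    (measurable_cubeIndex i)

variable {m : ℕ}

def gridShear (n m : ℕ) (j : ℤ) (z : Fin n → ℂ) : ℝ :=
  ∑' k : ℕ, increment n (j - (k + 1) * m) (j - k * m) z

theorem two_zpow_sub_mul_le (hm : 0 < m) (a : ℤ) (k : ℕ) :
    (2 : ℝ) ^ (a - k * m) ≤ 2 ^ a * (1 / 2) ^ k := by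
  rw [← two_zpow_sub_natCast]
  exact zpow_le_zpow_right₀ one_le_two (by nlinarith)

theorem summable_shear_sub_mul (hm : 0 < m) (j : ℤ) (z : Fin n → ℂ) :
    Summable fun k : ℕ => shear n (j - k * m) z := by
  refine Summable.of_norm_bounded ((summable_geometric_two).mul_left (2 * 2 ^ j * ∑ k, ‖z k‖))
    fun k => (Real.norm_eq_abs _).trans_le ((abs_shear_le _ z).trans ?_)
  have := two_zpow_sub_mul_le hm j k
  have : 0 ≤ ∑ k, ‖z k‖ := by positivity
  calc 2 * 2 ^ (j - k * m) * ∑ k, ‖z k‖ ≤ 2 * (2 ^ j * (1 / 2) ^ k) * ∑ k, ‖z k‖ := by gcongr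
    _ = _ := by ring

theorem abs_increment_sub_mul_le (hm : 0 < m) (j : ℤ) (z : Fin n → ℂ) (k : ℕ) :
    |increment n (j - (k + 1) * m) (j - k * m) z
      - (shear n (j - k * m) z - shear n (j - ↑(k + 1) * m) z)|
      ≤ (4 * n + 1) * 2 ^ (2 * j - m) * (1 / 2) ^ k := by
  have hle : j - (k + 1) * m ≤ j - k * m := by linarith
  have hpow : (2 : ℝ) ^ (j - (k + 1) * m) * 2 ^ (j - k * m) ≤ 2 ^ (2 * j - m) * (1 / 2) ^ k := by
    rw [← zpow_add₀ two_ne_zero]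
    convert two_zpow_sub_mul_le (m := 2 * m) (by omega) (2 * j - m) k using 2
    push_cast; ring
  push_cast
  refine (abs_increment_sub_le hle z).trans ?_
  rw [mul_assoc]
  gcongr

theorem summable_increment (hm : 0 < m) (j : ℤ) (z : Fin n → ℂ) :
    Summable fun k : ℕ => increment n (j - (k + 1) * m) (j - k * m) z :=
  summable_of_abs_sub_sub_succ_le (summable_shear_sub_mul hm j z)
    (summable_geometric_two.mul_left _) (abs_increment_sub_mul_le hm j z)

theorem abs_gridShear_sub_shear_le (hm : 0 < m) (j : ℤ) (z : Fin n → ℂ) :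
    |gridShear n m j z - shear n j z| ≤ 2 * (4 * n + 1) * 2 ^ (2 * j - m) := by
  have := abs_tsum_sub_le_of_abs_sub_sub_succ_le (summable_shear_sub_mul hm j z)
    (summable_geometric_two.mul_left _) (abs_increment_sub_mul_le hm j z)
  rw [tsum_mul_left, tsum_geometric_two] at this
  simpa [gridShear, mul_comm, mul_left_comm] using this

theorem gridShear_add (hm : 0 < m) (j : ℤ) (z : Fin n → ℂ) :
    gridShear n m (j + m) z = increment n j (j + m) z + gridShear n m j z := by
  rw [gridShear, (summable_increment hm (j + m) z).tsum_eq_zero_add, gridShear]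
  congr 1
  · simp
  · congr! 3 <;> push_cast <;> ring

theorem measurable_gridShear (j : ℤ) : Measurable (gridShear n m j) :=
  Measurable.tsum fun _ => measurable_increment _ _

theorem abs_gridShear_sub_shear_le_quarter (hε : 8 * (4 * n + 1) ≤ 2 ^ m) (j : ℤ)
    (z : Fin n → ℂ) : |gridShear n m j z - shear n j z| ≤ 2 ^ (2 * j) / 4 := by
  have hm : 0 < m := Nat.pos_of_ne_zero fun h => by simp [h] at hε; omega
  have hε' : (8 * (4 * n + 1) : ℝ) ≤ 2 ^ m := by exact_mod_cast hε
  refine (abs_gridShear_sub_shear_le hm j z).trans ?_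
  rw [zpow_sub₀ two_ne_zero, zpow_natCast, mul_div_assoc', div_le_div_iff₀ (by positivity) four_pos]
  nlinarith [zpow_pos (two_pos : (0 : ℝ) < 2) (2 * j)]

def cellIndex (n m : ℕ) (j : ℤ) (p : Heis n) : (Fin n → ℤ × ℤ) × ℤ :=
  (cubeIndex n j p.1, ⌊(p.2 + gridShear n m j p.1) / 2 ^ (2 * j)⌋)

def cell (n m : ℕ) (j : ℤ) (a : Fin n → ℤ × ℤ) (t : ℤ) : Set (Heis n) :=
  cellIndex n m j ⁻¹' {(a, t)}

theorem measurable_cellIndex (j : ℤ) : Measurable (cellIndex n m j) :=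
  ((measurable_cubeIndex j).comp measurable_fst).prodMk
    ((measurable_snd.add ((measurable_gridShear j).comp measurable_fst)).div_const _).floor

theorem fst_image_cell (j : ℤ) (a : Fin n → ℤ × ℤ) (t : ℤ) :
    Prod.fst '' cell n m j a t = dyadicCube n j a := by
  ext z
  rw [mem_dyadicCube_iff]
  constructor
  · rintro ⟨p, hp, rfl⟩
    exact congrArg Prod.fst hp
  · rintro rfl
    refine ⟨(z, 2 ^ (2 * j) * t - gridShear n m j z), ?_, rfl⟩
    simp [cell, cellIndex, zpow_ne_zero]

theorem cellIndex_add_eq (hm : 0 < m) {j : ℤ} {p q : Heis n}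
    (h : cellIndex n m j p = cellIndex n m j q) :
    cellIndex n m (j + m) p = cellIndex n m (j + m) q := by
  simp only [cellIndex, Prod.ext_iff] at h ⊢
  obtain ⟨hz, ht⟩ := h
  -- the increment from scale `j` to `j + m` is a multiple of `2 ^ (2 * j)` fixed by `cubeIndex n j`
  have hfloor (r : Heis n) : ⌊(r.2 + gridShear n m (j + m) r.1) / 2 ^ (2 * (j + m))⌋
      = (⌊(r.2 + gridShear n m j r.1) / 2 ^ (2 * j)⌋
        + ⌊(shear n (j + m) (cubeCenterOf n j r.1) - shear n j (cubeCenterOf n j r.1)) / 2 ^ (2 * j)⌋)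
        / (2 ^ (2 * m) : ℕ) := by
    rw [← floor_add_mul_div_two_zpow, gridShear_add hm, increment]
    congr 2
    · ring
    · congr 1
      push_cast
      ring
  refine ⟨cubeIndex_eq_of_le (by omega) hz, ?_⟩
  rw [hfloor, hfloor, ht, cubeCenterOf, cubeCenterOf, hz]

theorem cellIndex_eq_of_dvd (hm : 0 < m) {j j' : ℤ} (hjj' : j ≤ j') (hdvd : (m : ℤ) ∣ j' - j)
    {p q : Heis n} (h : cellIndex n m j p = cellIndex n m j q) :
    cellIndex n m j' p = cellIndex n m j' q := by
  obtain ⟨c, hc⟩ := hdvd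
  have hc0 : 0 ≤ c := by nlinarith
  lift c to ℕ using hc0
  obtain rfl : j' = j + c * m := by linarith
  clear hjj' hc
  induction c with
  | zero => simpa using h
  | succ c ih =>
    rw [Nat.cast_succ, add_one_mul, ← add_assoc]
    exact cellIndex_add_eq hm ih

theorem cell_subset_or_disjoint (hm : 0 < m) {j j' : ℤ} (hjj' : j ≤ j') (hdvd : (m : ℤ) ∣ j' - j)
    (a : Fin n → ℤ × ℤ) (t : ℤ) (a' : Fin n → ℤ × ℤ) (t' : ℤ) :
    cell n m j a t ⊆ cell n m j' a' t' ∨ Disjoint (cell n m j a t) (cell n m j' a' t') :=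
  Set.preimage_singleton_subset_or_disjoint (fun _ _ => cellIndex_eq_of_dvd hm hjj' hdvd) _ _

theorem cell_subset_ball (hε : 8 * (4 * n + 1) ≤ 2 ^ m) (j : ℤ) (a : Fin n → ℤ × ℤ) (t : ℤ) :
    cell n m j a t ⊆ hBall (gridCenter n j a t) ((n + 1) * 2 ^ j) := by
  intro p hp
  simp only [cell, cellIndex, Set.mem_preimage, Set.mem_singleton_iff, Prod.ext_iff] at hp
  obtain ⟨ha, ht⟩ := hp
  have hD : (0 : ℝ) < 2 ^ (2 * j) := by positivity
  obtain ⟨ht₁, ht₂⟩ := (Int.floor_div_eq_iff hD).mp ht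
  have herr := abs_le.mp (abs_gridShear_sub_shear_le_quarter hε j p.1)
  have hX : ∑ k, Complex.normSq (cubeCenter n j a k - p.1 k) ≤ n * 2 ^ (2 * j) := by
    calc _ ≤ ∑ _k : Fin n, (2 : ℝ) ^ (2 * j) := Finset.sum_le_sum fun k _ => ?_
      _ = n * 2 ^ (2 * j) := by simp
    rw [Complex.normSq_eq_norm_sq, two_zpow_two_mul]
    gcongr
    exact ha ▸ norm_cubeCenterOf_sub_le j p.1 k
  have hX₀ : 0 ≤ ∑ k, Complex.normSq (cubeCenter n j a k - p.1 k) :=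
    Finset.sum_nonneg fun k _ => Complex.normSq_nonneg _
  rw [hBall, Set.mem_ofPred_eq, hDist_lt_iff (by positivity)]
  simp only [gridCenter]
  rw [← shear_eq_of_cubeIndex_eq ha, zpow_sub_one₀ two_ne_zero]
  have hV : |2 ^ (2 * j) * t + 2 ^ (2 * j) * 2⁻¹ - p.2 - shear n j p.1| ≤ 3 / 4 * 2 ^ (2 * j) :=
    abs_le.mpr ⟨by linarith, by linarith⟩
  have hn : (0 : ℝ) ≤ n := n.cast_nonneg
  calc _ ≤ (n * (2 : ℝ) ^ (2 * j)) ^ 2 + (3 / 4 * 2 ^ (2 * j)) ^ 2 :=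
        add_le_add (pow_le_pow_left₀ hX₀ hX 2) (sq_le_sq' (abs_le.mp hV).1 (abs_le.mp hV).2)
    _ = ((n : ℝ) ^ 2 + (3 / 4) ^ 2) * (2 ^ j) ^ 4 := by rw [two_zpow_two_mul]; ring
    _ < ((n : ℝ) + 1) ^ 4 * (2 ^ j) ^ 4 := by gcongr; nlinarith
    _ = ((n + 1) * 2 ^ j) ^ 4 := by ring

theorem ball_subset_cell (hε : 8 * (4 * n + 1) ≤ 2 ^ m) (j : ℤ) (a : Fin n → ℤ × ℤ) (t : ℤ) :
    hBall (gridCenter n j a t) (1 / 4 * 2 ^ j) ⊆ cell n m j a t := by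
  intro p hp
  rw [hBall, Set.mem_ofPred_eq, hDist_lt_iff (by positivity)] at hp
  simp only [gridCenter] at hp
  have hD : (0 : ℝ) < 2 ^ (2 * j) := by positivity
  have hr : ((1 : ℝ) / 4 * 2 ^ j) ^ 4 = (2 ^ (2 * j) / 16) ^ 2 := by
    rw [two_zpow_two_mul]; ring
  rw [hr, zpow_sub_one₀ two_ne_zero] at hp
  have hX₀ : 0 ≤ ∑ k, Complex.normSq (cubeCenter n j a k - p.1 k) :=
    Finset.sum_nonneg fun k _ => Complex.normSq_nonneg _
  have hX : ∑ k, Complex.normSq (cubeCenter n j a k - p.1 k) < 2 ^ (2 * j) / 16 :=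
    lt_of_pow_lt_pow_left₀ 2 (by positivity) (by nlinarith)
  have ha : cubeIndex n j p.1 = a := by
    refine mem_dyadicCube_iff.mp (mem_dyadicCube_of_norm_sub_lt fun k => ?_)
    have hk : ‖cubeCenter n j a k - p.1 k‖ ^ 2 < (2 ^ j / 4) ^ 2 := by
      rw [← Complex.normSq_eq_norm_sq]
      calc _ ≤ ∑ k, Complex.normSq (cubeCenter n j a k - p.1 k) :=
            Finset.single_le_sum (fun i _ => Complex.normSq_nonneg _) (Finset.mem_univ k)
        _ < 2 ^ (2 * j) / 16 := hX
        _ = (2 ^ j / 4) ^ 2 := by rw [two_zpow_two_mul]; ring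
    linarith [lt_of_pow_lt_pow_left₀ 2 (by positivity) hk, zpow_pos (two_pos : (0 : ℝ) < 2) j]
  rw [← shear_eq_of_cubeIndex_eq ha] at hp
  have hV := abs_lt.mp (abs_lt_of_sq_lt_sq (by nlinarith) (by positivity) :
    |2 ^ (2 * j) * t + 2 ^ (2 * j) * 2⁻¹ - p.2 - shear n j p.1| < 2 ^ (2 * j) / 16)
  have herr := abs_le.mp (abs_gridShear_sub_shear_le_quarter hε j p.1)
  simp only [cell, cellIndex, Set.mem_preimage, Set.mem_singleton_iff, Prod.ext_iff]
  exact ⟨ha, (Int.floor_div_eq_iff hD).mpr ⟨by linarith, by linarith⟩⟩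

end

def heisGrid (n m : ℕ) (hε : 8 * (4 * n + 1) ≤ 2 ^ m) : HeisGrid n m (1 / 4) (n + 1) where
  S := cell n m
  measurableSet_S j _ _ := measurable_cellIndex j (measurableSet_singleton _)
  existsUnique_mem j _ p := ⟨cellIndex n m j p, rfl, fun _ h => h.symm⟩
  proj_eq j _ := fst_image_cell j
  ball_subset j _ := ball_subset_cell hε j
  subset_ball j _ := cell_subset_ball hε j
  nested j j' hj hj' a a' t t' := by
    have hm : 0 < m := Nat.pos_of_ne_zero fun h => by simp [h] at hε; omega
    rcases le_total j j' with h | h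
    · rcases cell_subset_or_disjoint hm h (dvd_sub hj' hj) a t a' t' with hs | hd
      exacts [Or.inl hs, Or.inr (Or.inr hd)]
    · rcases cell_subset_or_disjoint hm h (dvd_sub hj hj') a' t' a t with hs | hd
      exacts [Or.inr (Or.inl hs), Or.inr (Or.inr hd.symm)]

theorem exists_heisenberg_dyadic_grid_general (n : ℕ) :
    ∃ (m : ℕ) (C₁ C₂ : ℝ), 0 < m ∧ 0 < C₁ ∧ C₁ ≤ C₂ ∧
      Nonempty (HeisGrid n m C₁ C₂) :=
  ⟨8 * (4 * n + 1), 1 / 4, n + 1, by omega, by norm_num, by linarith [n.cast_nonneg (α := ℝ)],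
    ⟨heisGrid n _ Nat.lt_two_pow_self.le⟩⟩

/-- **Existence of a Heisenberg dyadic grid** (Theorem on the Heisenberg grid):
there are a positive integer `m` and constants `0 < C₁ ≤ C₂`, depending only on `n`,
such that `ℍⁿ` admits a Heisenberg dyadic grid with parameters `(m, C₁, C₂)`. -/
theorem exists_heisenberg_dyadic_grid (n : ℕ) (hn : 0 < n) :
    ∃ (m : ℕ) (C₁ C₂ : ℝ), 0 < m ∧ 0 < C₁ ∧ C₁ ≤ C₂ ∧
      Nonempty (HeisGrid n m C₁ C₂) :=
  exists_heisenberg_dyadic_grid_general n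
end
end

section
/- For j ∈ ℤ, α ∈ 2^j ℤ^{2n} and τ ∈ 2^{2j} ℤ, let P_{j,α} be the center of the dyadic cube I_α^j = α + [0,2^j)^{2n} ⊂ C^n and define the slab S_{j,α,τ} = {(η,s) ∈ C^n × ℝ : η ∈ I_α^j and τ ≤ s − 2 Im(η · P̄_{j,α}) < τ + 2^{2j}}. Then for each fixed j ∈ ℤ the slabs {S_{j,α,τ} : α ∈ 2^j ℤ^{2n}, τ ∈ 2^{2j} ℤ} are pairwise disjoint with union H^n, and there exist positive constants C₁, C₂ depending only on n — one may take C₁ = 1/2 and C₂ = (n²+2)^{1/4}/√2 — such that B_ρ(c_{j,α,τ}, C₁ 2^j) ⊆ S_{j,α,τ} ⊆ B_ρ(c_{j,α,τ}, C₂ 2^j), where c_{j,α,τ} = (P_{j,α}, τ + 2^{2j−1}). -/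
open MeasureTheory Complex
open scoped ENNReal

noncomputable section

/-- The slab `S_{j,α,τ} = {(η,s) : η ∈ I_α^j, τ ≤ s - 2 Im (η·P̄_{j,α}) < τ + 2^{2j}}`,
where `τ = 2^{2j} t`. -/
def slab (n : ℕ) (j : ℤ) (a : Fin n → ℤ × ℤ) (t : ℤ) : Set (Heis n) :=
  {p | p.1 ∈ dyadicCube n j a ∧
    (2:ℝ)^(2*j) * (t : ℝ) ≤
      p.2 - 2 * (∑ k : Fin n, p.1 k * (starRingEnd ℂ) (cubeCenter n j a k)).im ∧
    p.2 - 2 * (∑ k : Fin n, p.1 k * (starRingEnd ℂ) (cubeCenter n j a k)).im <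
      (2:ℝ)^(2*j) * (t : ℝ) + (2:ℝ)^(2*j)}

lemma hdist_eq {n : ℕ} (c p : Heis n) :
    hDist c p = ((∑ k : Fin n, Complex.normSq (c.1 k - p.1 k)) ^ 2 +
      (c.2 - p.2 + 2 * (∑ k : Fin n, p.1 k * (starRingEnd ℂ) (c.1 k)).im) ^ 2) ^ ((1:ℝ)/4) := by
  unfold hDist Hmul Hinv hNorm
  simp only [Pi.add_apply, Pi.neg_apply]
  have h1 : (∑ k : Fin n, Complex.normSq (c.1 k + -p.1 k))
      = ∑ k : Fin n, Complex.normSq (c.1 k - p.1 k) :=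
    Finset.sum_congr rfl fun k _ => by rw [sub_eq_add_neg]
  have h2 : (∑ k : Fin n, c.1 k * (starRingEnd ℂ) (-p.1 k)).im
      = (∑ k : Fin n, p.1 k * (starRingEnd ℂ) (c.1 k)).im := by
    rw [Complex.im_sum, Complex.im_sum]
    refine Finset.sum_congr rfl fun k _ => ?_
    simp [Complex.mul_im]
    ring
  rw [h1, h2]
  ring_nf
lemma floor_char {δ x : ℝ} (hδ : 0 < δ) (m : ℤ) :
    (δ * m ≤ x ∧ x < δ * m + δ) ↔ m = ⌊x / δ⌋ := by
  rw [eq_comm, Int.floor_eq_iff]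
  constructor
  · rintro ⟨h1, h2⟩
    refine ⟨by rw [le_div_iff₀ hδ]; linarith, by rw [div_lt_iff₀ hδ]; linarith⟩
  · rintro ⟨h1, h2⟩
    rw [le_div_iff₀ hδ] at h1
    rw [div_lt_iff₀ hδ] at h2
    constructor <;> nlinarith

lemma quart_lt {x r : ℝ} (hx : 0 ≤ x) (hr : 0 < r) :
    x ^ ((1:ℝ)/4) < r ↔ x < r ^ 4 := by
  constructor
  · intro h
    have h4 := pow_lt_pow_left₀ h (Real.rpow_nonneg hx _) (by norm_num : (4:ℕ) ≠ 0)
    rwa [← Real.rpow_natCast (x ^ ((1:ℝ)/4)) 4, ← Real.rpow_mul hx,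
      show (1:ℝ)/4 * (4:ℕ) = 1 by norm_num, Real.rpow_one] at h4
  · intro h
    by_contra hle
    push_neg at hle
    have h4 := pow_le_pow_left₀ hr.le hle 4
    rw [← Real.rpow_natCast (x ^ ((1:ℝ)/4)) 4, ← Real.rpow_mul hx,
      show (1:ℝ)/4 * (4:ℕ) = 1 by norm_num, Real.rpow_one] at h4
    linarith

lemma hdist_grid {n : ℕ} (j : ℤ) (a : Fin n → ℤ × ℤ) (t : ℤ) (z : Fin n → ℂ) (u : ℝ) :
    hDist (gridCenter n j a t) (z, u) =
      ((∑ k : Fin n, Complex.normSq (cubeCenter n j a k - z k)) ^ 2 +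
        ((2:ℝ)^(2*j) * (t:ℝ) + (2:ℝ)^(2*j-1) - u +
          2 * (∑ k : Fin n, z k * (starRingEnd ℂ) (cubeCenter n j a k)).im) ^ 2) ^ ((1:ℝ)/4) :=
  hdist_eq _ _

/-- **The slabs form a semigrid of almost balls in `ℍⁿ`**: for each fixed `j` the slabs
are pairwise disjoint with union `ℍⁿ`, and with `C₁ = 1/2`, `C₂ = (n²+2)^{1/4}/√2` one has
`B_ρ(c_{j,α,τ}, C₁ 2^j) ⊆ S_{j,α,τ} ⊆ B_ρ(c_{j,α,τ}, C₂ 2^j)`. -/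
theorem slab_semigrid (n : ℕ) (hn : 0 < n) :
    (∀ (j : ℤ) (p : Heis n), ∃! c : (Fin n → ℤ × ℤ) × ℤ, p ∈ slab n j c.1 c.2) ∧
    (∀ (j : ℤ) (a : Fin n → ℤ × ℤ) (t : ℤ),
      hBall (gridCenter n j a t) ((1/2 : ℝ) * (2:ℝ)^j) ⊆ slab n j a t ∧
      slab n j a t ⊆ hBall (gridCenter n j a t)
        ((((n:ℝ)^2 + 2) ^ ((1:ℝ)/4) / Real.sqrt 2) * (2:ℝ)^j)) := by
  constructor
  · -- each point lies in exactly one slab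
    intro j p
    obtain ⟨z, u⟩ := p
    have hδ : (0:ℝ) < (2:ℝ)^j := by positivity
    have hδ2 : (0:ℝ) < (2:ℝ)^(2*j) := by positivity
    refine ⟨(fun k => (⌊(z k).re / (2:ℝ)^j⌋, ⌊(z k).im / (2:ℝ)^j⌋),
        ⌊(u - 2 * (∑ k : Fin n, z k * (starRingEnd ℂ)
          (cubeCenter n j (fun k => (⌊(z k).re / (2:ℝ)^j⌋, ⌊(z k).im / (2:ℝ)^j⌋)) k)).im)
          / (2:ℝ)^(2*j)⌋),
      ⟨fun k => ⟨(floor_char hδ _).mpr rfl, (floor_char hδ _).mpr rfl⟩,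
        ((floor_char hδ2 _).mpr rfl).1, ((floor_char hδ2 _).mpr rfl).2⟩, ?_⟩
    rintro ⟨b, s⟩ ⟨hcube, h1, h2⟩
    have hb : b = fun k => (⌊(z k).re / (2:ℝ)^j⌋, ⌊(z k).im / (2:ℝ)^j⌋) :=
      funext fun k => Prod.ext ((floor_char hδ _).mp (hcube k).1)
        ((floor_char hδ _).mp (hcube k).2)
    subst hb
    have hs := (floor_char hδ2 s).mp ⟨h1, h2⟩
    rw [hs]
  · intro j a t
    have hδ : (0:ℝ) < (2:ℝ)^j := by positivity
    have hhalf : (2:ℝ)^(j-1) = (2:ℝ)^j / 2 := by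
      rw [zpow_sub₀ (two_ne_zero), zpow_one]
    have hsq : (2:ℝ)^(2*j) = ((2:ℝ)^j)^2 := by
      rw [two_mul, zpow_add₀ (two_ne_zero)]; ring
    have hsqm : (2:ℝ)^(2*j-1) = ((2:ℝ)^j)^2 / 2 := by
      rw [zpow_sub₀ (two_ne_zero), zpow_one, hsq]
    have hPre : ∀ k, (cubeCenter n j a k).re = (2:ℝ)^j * ((a k).1:ℝ) + (2:ℝ)^j / 2 := by
      intro k
      simp only [cubeCenter, Complex.add_re, Complex.ofReal_re, Complex.mul_re,
        Complex.ofReal_im, Complex.I_re, Complex.I_im]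
      rw [hhalf]; ring
    have hPim : ∀ k, (cubeCenter n j a k).im = (2:ℝ)^j * ((a k).2:ℝ) + (2:ℝ)^j / 2 := by
      intro k
      simp only [cubeCenter, Complex.add_im, Complex.ofReal_re, Complex.mul_im,
        Complex.ofReal_im, Complex.I_re, Complex.I_im]
      rw [hhalf]; ring
    constructor
    · rintro ⟨z, u⟩ hp
      rw [hBall, Set.mem_setOf_eq, hdist_grid,
        quart_lt (by positivity) (by positivity)] at hp
      set S := ∑ k : Fin n, Complex.normSq (cubeCenter n j a k - z k) with hSdef
      set B := (2:ℝ)^(2*j) * (t:ℝ) + (2:ℝ)^(2*j-1) - u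
        + 2 * (∑ k : Fin n, z k * (starRingEnd ℂ) (cubeCenter n j a k)).im with hBdef
      clear_value S B
      have hSnn : 0 ≤ S := by
        rw [hSdef]; exact Finset.sum_nonneg fun k _ => Complex.normSq_nonneg _
      have hp' : S^2 + B^2 < ((2:ℝ)^j)^4 / 16 := by linarith only [hp]
      have hS : S < ((2:ℝ)^j)^2 / 4 := by nlinarith only [sq_nonneg B, hSnn, hp', sq_nonneg ((2:ℝ)^j)]
      have hB1 : B < ((2:ℝ)^j)^2 / 4 := by nlinarith only [sq_nonneg S, hp', sq_nonneg ((2:ℝ)^j)]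
      have hB2 : -(((2:ℝ)^j)^2 / 4) < B := by nlinarith only [sq_nonneg S, hp', sq_nonneg ((2:ℝ)^j)]
      clear hp hp'
      have hrel : B + (u - 2 * (∑ k : Fin n, z k * (starRingEnd ℂ)
          (cubeCenter n j a k)).im) = ((2:ℝ)^j)^2 * (t:ℝ) + ((2:ℝ)^j)^2 / 2 := by
        rw [hBdef, hsq, hsqm]; ring
      refine ⟨fun k => ?_, ?_, ?_⟩
      · have hk : Complex.normSq (cubeCenter n j a k - z k) ≤ S := by
          rw [hSdef]
          exact Finset.single_le_sum (f := fun k => Complex.normSq (cubeCenter n j a k - z k))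
            (fun i _ => Complex.normSq_nonneg _) (Finset.mem_univ k)
        rw [Complex.normSq_apply, Complex.sub_re, Complex.sub_im, hPre k, hPim k] at hk
        have hdd : ((2:ℝ)^j * ((a k).1:ℝ) + (2:ℝ)^j / 2 - (z k).re) *
            ((2:ℝ)^j * ((a k).1:ℝ) + (2:ℝ)^j / 2 - (z k).re) < ((2:ℝ)^j)^2 / 4 := by
          linarith only [hk, hS, mul_self_nonneg ((2:ℝ)^j * ((a k).2:ℝ) + (2:ℝ)^j / 2 - (z k).im)]
        have hee : ((2:ℝ)^j * ((a k).2:ℝ) + (2:ℝ)^j / 2 - (z k).im) *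
            ((2:ℝ)^j * ((a k).2:ℝ) + (2:ℝ)^j / 2 - (z k).im) < ((2:ℝ)^j)^2 / 4 := by
          linarith only [hk, hS, mul_self_nonneg ((2:ℝ)^j * ((a k).1:ℝ) + (2:ℝ)^j / 2 - (z k).re)]
        exact ⟨⟨by nlinarith only [hdd, hδ], by nlinarith only [hdd, hδ]⟩,
          by nlinarith only [hee, hδ], by nlinarith only [hee, hδ]⟩
      · show (2:ℝ)^(2*j) * (t:ℝ) ≤ u - 2 * (∑ k : Fin n, z k * (starRingEnd ℂ)
          (cubeCenter n j a k)).im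
        rw [hsq]; linarith only [hB1, hrel, pow_pos hδ 2]
      · show u - 2 * (∑ k : Fin n, z k * (starRingEnd ℂ) (cubeCenter n j a k)).im <
          (2:ℝ)^(2*j) * (t:ℝ) + (2:ℝ)^(2*j)
        rw [hsq]; linarith only [hB2, hrel, pow_pos hδ 2]
    · rintro ⟨z, u⟩ ⟨hcube, ht1, ht2⟩
      rw [hBall, Set.mem_setOf_eq, hdist_grid,
        quart_lt (by positivity) (by positivity)]
      set S := ∑ k : Fin n, Complex.normSq (cubeCenter n j a k - z k) with hSdef
      set B := (2:ℝ)^(2*j) * (t:ℝ) + (2:ℝ)^(2*j-1) - u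
        + 2 * (∑ k : Fin n, z k * (starRingEnd ℂ) (cubeCenter n j a k)).im with hBdef
      clear_value S B
      have hSnn : 0 ≤ S := by
        rw [hSdef]; exact Finset.sum_nonneg fun k _ => Complex.normSq_nonneg _
      have hk : ∀ k, Complex.normSq (cubeCenter n j a k - z k) ≤ ((2:ℝ)^j)^2 / 2 := by
        intro k
        obtain ⟨⟨hr1, hr2⟩, hi1, hi2⟩ := hcube k
        rw [Complex.normSq_apply, Complex.sub_re, Complex.sub_im, hPre k, hPim k]
        nlinarith only [hr1, hr2, hi1, hi2, hδ]
      have hSle : S ≤ (n:ℝ) * (((2:ℝ)^j)^2 / 2) := by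
        calc S = ∑ k : Fin n, Complex.normSq (cubeCenter n j a k - z k) := hSdef
        _ ≤ ∑ _k : Fin n, ((2:ℝ)^j)^2 / 2 := Finset.sum_le_sum fun k _ => hk k
        _ = (n:ℝ) * (((2:ℝ)^j)^2 / 2) := by
          rw [Finset.sum_const, Finset.card_univ, Fintype.card_fin, nsmul_eq_mul]
      have hrel : B + (u - 2 * (∑ k : Fin n, z k * (starRingEnd ℂ)
          (cubeCenter n j a k)).im) = ((2:ℝ)^j)^2 * (t:ℝ) + ((2:ℝ)^j)^2 / 2 := by
        rw [hBdef, hsq, hsqm]; ring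
      rw [hsq] at ht1 ht2
      have hBb1 : B ≤ ((2:ℝ)^j)^2 / 2 := by linarith only [ht1, hrel]
      have hBb2 : -(((2:ℝ)^j)^2 / 2) < B := by linarith only [ht2, hrel]
      have hC4 : ((((n:ℝ)^2 + 2) ^ ((1:ℝ)/4) / Real.sqrt 2) * (2:ℝ)^j)^4
          = (((n:ℝ)^2 + 2)/4) * ((2:ℝ)^j)^4 := by
        rw [mul_pow, div_pow]
        have h1 : (((n:ℝ)^2+2) ^ ((1:ℝ)/4))^4 = (n:ℝ)^2+2 := by
          rw [← Real.rpow_natCast (((n:ℝ)^2+2) ^ ((1:ℝ)/4)) 4, ← Real.rpow_mul (by positivity),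
            show (1:ℝ)/4 * (4:ℕ) = 1 by norm_num, Real.rpow_one]
        have h2 : (Real.sqrt 2)^4 = 4 := by
          rw [show (4:ℕ) = 2*2 from rfl, pow_mul, Real.sq_sqrt (by norm_num : (0:ℝ) ≤ 2)]
          norm_num
        rw [h1, h2]
      rw [hC4]
      have hS2 : S^2 ≤ ((n:ℝ) * (((2:ℝ)^j)^2 / 2))^2 := by nlinarith only [hSnn, hSle]
      have hB2 : B^2 ≤ (((2:ℝ)^j)^2/2)^2 := by nlinarith only [hBb1, hBb2]
      have hd4 : (0:ℝ) < ((2:ℝ)^j)^4 := by positivity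
      linarith only [hS2, hB2, hd4]
end
end

section
/- Let n ≥ 1 and let Ω : C^n∖{0} → ℂ be bounded, measurable and homogeneous of degree 0 (Ω(λz) = Ω(z) for all λ > 0 and z ≠ 0). Define the mixed kernel K(z,t) = Ω(z) |z|^{−2n} (|z|² + it)^{−1} for z ≠ 0, t ∈ ℝ. Then there is a constant C depending only on n and sup|Ω| such that for every z ≠ 0, every δ > 0 and every C¹ function φ₁ : ℝ → ℂ supported in [−1,1] with |φ₁| ≤ 1 and |φ₁'| ≤ 1: |∫_ℝ K(z,t) φ₁(δt) dt| ≤ C |z|^{−2n}. (For each fixed z ≠ 0 and δ > 0 this integral converges absolutely.) -/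
/-!
Pulling out the factor `Ω(z) |z|^{-2n}` leaves `∫ (a + ti)⁻¹ φ(δt) dt` with `a = |z|² > 0`.
On the support `|t| ≤ δ⁻¹` write `φ(δt) = φ(0) + (φ(δt) - φ(0))`. Over the symmetric interval
the odd part of `(a + ti)⁻¹` cancels and the Poisson kernel `a / (a² + t²)` integrates to a
difference of two arctangents, hence to less than `π`. In the remainder, the Lipschitz bound
`|φ(δt) - φ(0)| ≤ δ|t|` absorbs the decay `|a + ti|⁻¹ ≤ |t|⁻¹`, leaving `δ` times the length
`2δ⁻¹` of the interval.
-/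

open MeasureTheory Complex
open scoped ENNReal

noncomputable section

/-- The squared Euclidean norm `|z|²` of `z ∈ ℂⁿ`. -/
def eSq {n : ℕ} (z : Fin n → ℂ) : ℝ := ∑ k : Fin n, Complex.normSq (z k)

/-- The Euclidean norm `|z|` of `z ∈ ℂⁿ`. -/
def zNorm {n : ℕ} (z : Fin n → ℂ) : ℝ := Real.sqrt (eSq z)

/-- The mixed kernel `K(z,t) = Ω(z) |z|^{-2n} (|z|² + it)⁻¹`. -/
def mixedK (n : ℕ) (Ω : (Fin n → ℂ) → ℂ) (z : Fin n → ℂ) (t : ℝ) : ℂ :=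
  Ω z * (((zNorm z ^ (2*n) : ℝ) : ℂ))⁻¹ * (((eSq z : ℝ) : ℂ) + (t : ℂ) * Complex.I)⁻¹

lemma continuous_inv_add_mul_I {a : ℝ} (ha : a ≠ 0) :
    Continuous fun t : ℝ => ((a : ℂ) + t * I)⁻¹ :=
  Continuous.inv₀ (by fun_prop) fun t h => ha (by simpa using congrArg re h)

lemma norm_inv_add_mul_I_mul_abs_le_one (a t : ℝ) : ‖((a : ℂ) + t * I)⁻¹‖ * |t| ≤ 1 := by
  have : |t| ≤ ‖(a : ℂ) + t * I‖ := by simpa using abs_im_le_norm ((a : ℂ) + t * I)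
  rw [norm_inv]
  exact inv_mul_le_one_of_le₀ this (norm_nonneg _)

lemma inv_add_mul_I_add_inv_sub_mul_I {a : ℝ} (ha : a ≠ 0) (t : ℝ) :
    ((a : ℂ) + t * I)⁻¹ + ((a : ℂ) + (-t : ℝ) * I)⁻¹ = ((2 * a / (a ^ 2 + t ^ 2) : ℝ) : ℂ) := by
  have h₁ : (a : ℂ) + t * I ≠ 0 := fun h => ha (by simpa using congrArg re h)
  have h₂ : (a : ℂ) + (-t : ℝ) * I ≠ 0 := fun h => ha (by simpa using congrArg re h)
  have hprod : ((a : ℂ) + t * I) * ((a : ℂ) + (-t : ℝ) * I) = ((a ^ 2 + t ^ 2 : ℝ) : ℂ) := by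
    push_cast
    linear_combination (-(t : ℂ) ^ 2) * I_sq
  rw [inv_add_inv h₁ h₂, hprod]
  push_cast
  ring

theorem norm_intervalIntegral_inv_add_mul_I_le_pi {a : ℝ} (ha : a ≠ 0) (R : ℝ) :
    ‖∫ t in -R..R, ((a : ℂ) + t * I)⁻¹‖ ≤ Real.pi := by
  set f : ℝ → ℂ := fun t => ((a : ℂ) + t * I)⁻¹
  have hf : Continuous f := continuous_inv_add_mul_I ha
  have hsymm : ∫ t in -R..R, f (-t) = ∫ t in -R..R, f t := by
    rw [intervalIntegral.integral_comp_neg, neg_neg]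
  have htwice : 2 * ∫ t in -R..R, f t = ∫ t in -R..R, ((2 * a / (a ^ 2 + t ^ 2) : ℝ) : ℂ) := by
    rw [two_mul]
    nth_rw 2 [← hsymm]
    rw [← intervalIntegral.integral_add (g := fun t => f (-t)) (hf.intervalIntegrable _ _)
      ((hf.comp continuous_neg : Continuous fun t => f (-t)).intervalIntegrable _ _)]
    exact intervalIntegral.integral_congr fun t _ => by
      simpa [f] using inv_add_mul_I_add_inv_sub_mul_I ha t
  have hpoisson : ∫ t in -R..R, 2 * a / (a ^ 2 + t ^ 2)
      = 2 * (Real.arctan (R / a) - Real.arctan (-R / a)) := by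
    simp_rw [mul_div_assoc]
    rw [intervalIntegral.integral_const_mul, integral_div_sq_add_sq]
  rw [intervalIntegral.integral_ofReal, hpoisson] at htwice
  have hnorm := congrArg norm htwice
  rw [norm_mul, Complex.norm_two, norm_real, Real.norm_eq_abs, abs_mul, abs_two] at hnorm
  have harctan : |Real.arctan (R / a) - Real.arctan (-R / a)| < Real.pi :=
    abs_sub_lt_iff.2
      ⟨by linarith [Real.arctan_lt_pi_div_two (R / a), Real.neg_pi_div_two_lt_arctan (-R / a)],
        by linarith [Real.arctan_lt_pi_div_two (-R / a), Real.neg_pi_div_two_lt_arctan (R / a)]⟩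
  linarith

lemma apply_mul_eq_zero_of_notMem_Icc {φ : ℝ → ℂ} (hsupp : ∀ x ∉ Set.Icc (-1 : ℝ) 1, φ x = 0)
    {δ t : ℝ} (hδ : 0 < δ) (ht : t ∉ Set.Icc (-δ⁻¹) δ⁻¹) : φ (δ * t) = 0 := by
  refine hsupp _ fun hmem => ht ?_
  rw [Set.mem_Icc, ← abs_le] at hmem ⊢
  rwa [abs_mul, abs_of_pos hδ, ← le_div_iff₀' hδ, one_div] at hmem

theorem integrable_inv_add_mul_I_mul_apply_mul {a δ : ℝ} (ha : a ≠ 0) (hδ : 0 < δ)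
    {φ : ℝ → ℂ} (hφ : Continuous φ) (hsupp : ∀ x ∉ Set.Icc (-1 : ℝ) 1, φ x = 0) :
    Integrable fun t : ℝ => ((a : ℂ) + t * I)⁻¹ * φ (δ * t) :=
  Continuous.integrable_of_hasCompactSupport ((continuous_inv_add_mul_I ha).mul (by fun_prop)) <|
    HasCompactSupport.intro isCompact_Icc fun t ht => by
      rw [apply_mul_eq_zero_of_notMem_Icc hsupp hδ ht, mul_zero]

theorem norm_integral_inv_add_mul_I_mul_apply_mul_le {a δ M L : ℝ} (ha : a ≠ 0) (hδ : 0 < δ)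
    {φ : ℝ → ℂ} (hφ : Differentiable ℝ φ) (hsupp : ∀ x ∉ Set.Icc (-1 : ℝ) 1, φ x = 0)
    (hM : ‖φ 0‖ ≤ M) (hL : ∀ x, ‖deriv φ x‖ ≤ L) :
    ‖∫ t : ℝ, ((a : ℂ) + t * I)⁻¹ * φ (δ * t)‖ ≤ Real.pi * M + 2 * L := by
  set R := δ⁻¹
  set f : ℝ → ℂ := fun t => ((a : ℂ) + t * I)⁻¹
  have hf : Continuous f := continuous_inv_add_mul_I ha
  have hR : 0 < R := inv_pos.2 hδ
  have hL₀ : 0 ≤ L := (norm_nonneg _).trans (hL 0)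
  have hlip : ∀ x y, ‖φ x - φ y‖ ≤ L * ‖x - y‖ := fun x y =>
    convex_univ.norm_image_sub_le_of_norm_deriv_le (fun w _ => hφ w) (fun w _ => hL w)
      (Set.mem_univ y) (Set.mem_univ x)
  have hlocal : ∫ t, f t * φ (δ * t) = ∫ t in -R..R, f t * φ (δ * t) := by
    rw [intervalIntegral.integral_of_le (by linarith), ← integral_Icc_eq_integral_Ioc,
      setIntegral_eq_integral_of_forall_compl_eq_zero fun t ht => by
        simp only [apply_mul_eq_zero_of_notMem_Icc hsupp hδ ht, mul_zero]]
  have hsplit : ∫ t in -R..R, f t * φ (δ * t)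
      = (∫ t in -R..R, f t) * φ 0 + ∫ t in -R..R, f t * (φ (δ * t) - φ 0) := by
    have hφδ : Continuous fun t => φ (δ * t) - φ 0 :=
      (hφ.continuous.comp (continuous_const_mul δ)).sub continuous_const
    rw [← intervalIntegral.integral_mul_const, ← intervalIntegral.integral_add
      (f := fun t => f t * φ 0) (g := fun t => f t * (φ (δ * t) - φ 0))
      ((hf.mul continuous_const).intervalIntegrable _ _) ((hf.mul hφδ).intervalIntegrable _ _)]
    exact intervalIntegral.integral_congr fun t _ => by ring
  have hmain : ‖(∫ t in -R..R, f t) * φ 0‖ ≤ Real.pi * M := by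
    rw [norm_mul]
    exact mul_le_mul (norm_intervalIntegral_inv_add_mul_I_le_pi ha R) hM (norm_nonneg _)
      Real.pi_pos.le
  have herror : ‖∫ t in -R..R, f t * (φ (δ * t) - φ 0)‖ ≤ 2 * L := by
    have hpointwise : ∀ t, ‖f t * (φ (δ * t) - φ 0)‖ ≤ L * δ := fun t => calc
      ‖f t * (φ (δ * t) - φ 0)‖ ≤ ‖f t‖ * (L * (δ * |t|)) := by
        rw [norm_mul]
        gcongr
        simpa [abs_mul, abs_of_pos hδ] using hlip (δ * t) 0
      _ = L * δ * (‖f t‖ * |t|) := by ring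
      _ ≤ L * δ := mul_le_of_le_one_right (by positivity) (norm_inv_add_mul_I_mul_abs_le_one a t)
    calc _ ≤ L * δ * |R - -R| := intervalIntegral.norm_integral_le_of_norm_le_const fun t _ =>
          hpointwise t
      _ = 2 * L := by rw [sub_neg_eq_add, abs_of_pos (by linarith)]; simp only [R]; field_simp; ring
  calc ‖∫ t, f t * φ (δ * t)‖
      ≤ ‖(∫ t in -R..R, f t) * φ 0‖ + ‖∫ t in -R..R, f t * (φ (δ * t) - φ 0)‖ := by
        rw [hlocal, hsplit]; exact norm_add_le _ _
    _ ≤ Real.pi * M + 2 * L := add_le_add hmain herror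

lemma eSq_pos {n : ℕ} {z : Fin n → ℂ} (hz : z ≠ 0) : 0 < eSq z := by
  obtain ⟨k, hk⟩ := Function.ne_iff.1 hz
  exact Finset.sum_pos' (fun i _ => normSq_nonneg _) ⟨k, Finset.mem_univ k, normSq_pos.2 hk⟩

lemma mixedK_eq (n : ℕ) (Ω : (Fin n → ℂ) → ℂ) (z : Fin n → ℂ) (t : ℝ) :
    mixedK n Ω z t = (Ω z / (zNorm z ^ (2 * n) : ℝ)) * ((eSq z : ℂ) + t * I)⁻¹ := by
  rw [mixedK, div_eq_mul_inv]

theorem mixed_kernel_cancellation_central_general (n : ℕ) (B : ℝ) :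
    ∃ C : ℝ, 0 < C ∧
      ∀ Ω : (Fin n → ℂ) → ℂ, Measurable Ω → (∀ z, ‖Ω z‖ ≤ B) →
        (∀ (l : ℝ) (z : Fin n → ℂ), 0 < l → z ≠ 0 → Ω (l • z) = Ω z) →
        ∀ z : Fin n → ℂ, z ≠ 0 → ∀ δ : ℝ, 0 < δ →
        ∀ φ : ℝ → ℂ, ContDiff ℝ 1 φ → (∀ x : ℝ, x ∉ Set.Icc (-1:ℝ) 1 → φ x = 0) →
          (∀ x, ‖φ x‖ ≤ 1) → (∀ x, ‖deriv φ x‖ ≤ 1) →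
          Integrable (fun t : ℝ => mixedK n Ω z t * φ (δ * t)) volume ∧
          ‖∫ t : ℝ, mixedK n Ω z t * φ (δ * t)‖ ≤ C / zNorm z ^ (2*n) := by
  refine ⟨max B 1 * (Real.pi + 2), by positivity, ?_⟩
  intro Ω _ hΩ _ z hz δ hδ φ hφ hsupp hφ₁ hφ'₁
  have ha := eSq_pos hz
  have hr : 0 < zNorm z ^ (2 * n) := pow_pos (Real.sqrt_pos.2 ha) _
  simp_rw [mixedK_eq, mul_assoc]
  refine ⟨(integrable_inv_add_mul_I_mul_apply_mul ha.ne' hδ hφ.continuous hsupp).const_mul _, ?_⟩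
  have hcore := norm_integral_inv_add_mul_I_mul_apply_mul_le ha.ne' hδ
    (hφ.differentiable one_ne_zero) hsupp (hφ₁ 0) hφ'₁
  rw [integral_const_mul, norm_mul, norm_div, norm_real, Real.norm_of_nonneg hr.le]
  calc ‖Ω z‖ / zNorm z ^ (2 * n) * ‖∫ t : ℝ, ((eSq z : ℂ) + t * I)⁻¹ * φ (δ * t)‖
      ≤ B / zNorm z ^ (2 * n) * (Real.pi + 2) := by
        have hB : 0 ≤ B := (norm_nonneg _).trans (hΩ z)
        exact mul_le_mul (div_le_div_of_nonneg_right (hΩ z) hr.le) (by linarith) (norm_nonneg _)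
          (by positivity)
    _ ≤ max B 1 * (Real.pi + 2) / zNorm z ^ (2 * n) := by
        rw [div_mul_eq_mul_div]
        gcongr
        exact le_max_left B 1

/-- **Flag cancellation of the mixed kernel in the central variable**:
`|∫_ℝ K(z,t) φ₁(δt) dt| ≤ C |z|^{-2n}`, uniformly in the dilation `δ > 0`, for every
normalized `C¹` bump function `φ₁` on `ℝ`; the constant depends only on `n` and a bound
`B` on `|Ω|`.  For each fixed `z ≠ 0` and `δ > 0` the integral converges absolutely. -/
theorem mixed_kernel_cancellation_central (n : ℕ) (hn : 1 ≤ n) (B : ℝ) :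
    ∃ C : ℝ, 0 < C ∧
      ∀ Ω : (Fin n → ℂ) → ℂ, Measurable Ω → (∀ z, ‖Ω z‖ ≤ B) →
        (∀ (l : ℝ) (z : Fin n → ℂ), 0 < l → z ≠ 0 → Ω (l • z) = Ω z) →
        ∀ z : Fin n → ℂ, z ≠ 0 → ∀ δ : ℝ, 0 < δ →
        ∀ φ : ℝ → ℂ, ContDiff ℝ 1 φ → (∀ x : ℝ, x ∉ Set.Icc (-1:ℝ) 1 → φ x = 0) →
          (∀ x, ‖φ x‖ ≤ 1) → (∀ x, ‖deriv φ x‖ ≤ 1) →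
          Integrable (fun t : ℝ => mixedK n Ω z t * φ (δ * t)) volume ∧
          ‖∫ t : ℝ, mixedK n Ω z t * φ (δ * t)‖ ≤ C / zNorm z ^ (2*n) :=
  mixed_kernel_cancellation_central_general n B
end
end

section
/- Let n ≥ 1 and let Ω be a continuous function on C^n∖{0}, homogeneous of degree 0, bounded, and with mean zero on the unit sphere: ∫_{S^{2n−1}} Ω dσ = 0. Define K(z,t) = Ω(z) |z|^{−2n} (|z|² + it)^{−1} for z ≠ 0. Then there is a constant C depending only on n and sup|Ω| such that for every t ≠ 0, every δ > 0 and every C¹ function φ₂ : C^n → ℂ supported in the closed unit ball with |φ₂| ≤ 1 and |∇φ₂| ≤ 1: the principal value lim_{ε→0⁺} ∫_{{|z|>ε}} K(z,t) φ₂(δz) dz exists and its modulus is at most C |t|^{−1}; equivalently, the integral ∫_{C^n} K(z,t)(φ₂(δz) − φ₂(0)) χ_{{|z| ≤ 1/δ}}(z) dz converges absolutely and is bounded in modulus by C |t|^{−1}. -/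
open MeasureTheory Complex
open scoped ENNReal

noncomputable section

/-- The identification `ℝ^{2n} ≅ ℂⁿ`. -/
def toC (n : ℕ) (x : EuclideanSpace ℝ (Fin (n + n))) : Fin n → ℂ :=
  fun k => ((x (Fin.castAdd n k) : ℝ) : ℂ) + ((x (Fin.natAdd n k) : ℝ) : ℂ) * Complex.I

/-!
The kernel factors as `K(z,t) = Ω(z) k_t(|z|)`. In polar coordinates on `ℂⁿ ≅ ℝ^{2n}` an
integral `∫ Ω(z) g(|z|) dz` splits as `(∫_{S^{2n-1}} Ω dσ) (∫₀^∞ g(r) r^{2n-1} dr) = 0`, so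
`K(·,t)` integrates to zero over every annulus `ε < |z| ≤ 1/δ`. As `φ(δ·)` vanishes outside
`|z| ≤ 1/δ`, the integral over `|z| > ε` is therefore that of `K(z,t)(φ(δz) - φ(0))` over the
annulus. Since `|K(z,t)| ≤ B |z|^{-2n} |t|⁻¹` and `φ` is 1-Lipschitz, this integrand is at most
`B δ |t|⁻¹ |z|^{1-2n}`, whose integral over `|z| ≤ 1/δ` is `σ(S^{2n-1}) B |t|⁻¹` whatever `δ` is;
dominated convergence then gives the principal value.
-/

open Filter Metric Set Topology

section EuclideanNorm

variable {n : ℕ}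

local notation "ℝ²ⁿ" => EuclideanSpace ℝ (Fin (n + n))

lemma eSq_nonneg (z : Fin n → ℂ) : 0 ≤ eSq z :=
  Finset.sum_nonneg fun _ _ => normSq_nonneg _

lemma zNorm_nonneg (z : Fin n → ℂ) : 0 ≤ zNorm z := Real.sqrt_nonneg _

lemma zNorm_sq (z : Fin n → ℂ) : zNorm z ^ 2 = eSq z := Real.sq_sqrt (eSq_nonneg z)

lemma zNorm_pos {z : Fin n → ℂ} (hz : z ≠ 0) : 0 < zNorm z := by
  obtain ⟨k, hk⟩ := Function.ne_iff.1 hz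
  refine Real.sqrt_pos.2 (lt_of_lt_of_le (normSq_pos.2 hk) ?_)
  exact Finset.single_le_sum (fun i _ => normSq_nonneg (z i)) (Finset.mem_univ k)

lemma eSq_smul (c : ℝ) (z : Fin n → ℂ) : eSq (c • z) = c ^ 2 * eSq z := by
  simp only [eSq, Pi.smul_apply, Finset.mul_sum, real_smul, normSq_mul, normSq_ofReal, sq]

lemma zNorm_smul {c : ℝ} (hc : 0 ≤ c) (z : Fin n → ℂ) : zNorm (c • z) = c * zNorm z := by
  rw [zNorm, eSq_smul, Real.sqrt_mul (sq_nonneg c), Real.sqrt_sq hc, zNorm]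

lemma norm_le_zNorm (z : Fin n → ℂ) : ‖z‖ ≤ zNorm z := by
  refine (pi_norm_le_iff_of_nonneg (zNorm_nonneg z)).2 fun k => ?_
  refine (Real.le_sqrt (norm_nonneg _) (eSq_nonneg z)).2 ?_
  rw [Complex.sq_norm]
  exact Finset.single_le_sum (fun i _ => normSq_nonneg (z i)) (Finset.mem_univ k)

@[fun_prop]
lemma continuous_eSq : Continuous fun z : Fin n → ℂ => eSq z :=
  continuous_finsetSum _ fun k _ => continuous_normSq.comp (continuous_apply k)

@[fun_prop]
lemma continuous_zNorm : Continuous fun z : Fin n → ℂ => zNorm z :=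
  Real.continuous_sqrt.comp continuous_eSq

@[fun_prop]
lemma measurable_zNorm : Measurable fun z : Fin n → ℂ => zNorm z := continuous_zNorm.measurable

lemma zNorm_toC (x : ℝ²ⁿ) : zNorm (toC n x) = ‖x‖ := by
  rw [zNorm, EuclideanSpace.norm_eq, Fin.sum_univ_add, eSq, ← Finset.sum_add_distrib]
  congr 1
  refine Finset.sum_congr rfl fun k _ => ?_
  simp [toC, normSq_add_mul_I, sq_abs]

lemma toC_smul (c : ℝ) (x : ℝ²ⁿ) : toC n (c • x) = c • toC n x := by
  funext k
  simp only [toC, Pi.smul_apply, real_smul, PiLp.smul_apply, smul_eq_mul, ofReal_mul]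
  ring

end EuclideanNorm

def measurableEquivToC (n : ℕ) : EuclideanSpace ℝ (Fin (n + n)) ≃ᵐ (Fin n → ℂ) :=
  (MeasurableEquiv.toLp 2 (Fin (n + n) → ℝ)).symm.trans <|
  ((MeasurableEquiv.piCongrLeft (fun _ : Fin (n + n) => ℝ) finSumFinEquiv).symm).trans <|
  (MeasurableEquiv.sumPiEquivProdPi (fun _ : Fin n ⊕ Fin n => ℝ)).trans <|
  ((MeasurableEquiv.arrowProdEquivProdArrow ℝ ℝ (Fin n)).symm).trans <|
  (MeasurableEquiv.piCongrRight (fun _ : Fin n => measurableEquivRealProd.symm))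

section Transfer

variable {n : ℕ}

local notation "ℝ²ⁿ" => EuclideanSpace ℝ (Fin (n + n))

lemma coe_measurableEquivToC : ⇑(measurableEquivToC n) = toC n := by
  funext x k
  exact mk_eq_add_mul_I _ _

lemma measurePreserving_measurableEquivToC :
    MeasurePreserving (measurableEquivToC n) (volume : Measure ℝ²ⁿ) volume :=
  (measurePreserving_pi _ _ fun _ =>
      volume_preserving_equiv_real_prod.symm measurableEquivRealProd).comp <|
    ((volume_measurePreserving_arrowProdEquivProdArrow ℝ ℝ (Fin n)).symm _).comp <|
    (volume_measurePreserving_sumPiEquivProdPi _).comp <|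
    ((volume_measurePreserving_piCongrLeft (fun _ => ℝ) finSumFinEquiv).symm _).comp <|
    EuclideanSpace.volume_preserving_symm_measurableEquiv_toLp (Fin (n + n))

lemma integral_comp_toC {F : Type*} [NormedAddCommGroup F] [NormedSpace ℝ F]
    (f : (Fin n → ℂ) → F) : ∫ x : ℝ²ⁿ, f (toC n x) = ∫ z, f z := by
  rw [← coe_measurableEquivToC, measurePreserving_measurableEquivToC.integral_comp']

lemma integrable_comp_toC_iff {F : Type*} [NormedAddCommGroup F] {f : (Fin n → ℂ) → F} :
    Integrable (fun x : ℝ²ⁿ => f (toC n x)) ↔ Integrable f := by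
  rw [← coe_measurableEquivToC]
  exact measurePreserving_measurableEquivToC.integrable_comp_emb
    (measurableEquivToC n).measurableEmbedding

end Transfer

section Polar

variable {E : Type*} [NormedAddCommGroup E] [NormedSpace ℝ E] [FiniteDimensional ℝ E]
  [MeasurableSpace E] [BorelSpace E] [Nontrivial E] (μ : Measure E) [μ.IsAddHaarMeasure]

lemma integral_mul_fun_norm_eq_zero {𝕜 : Type*} [RCLike 𝕜] {f : E → 𝕜}
    (hf : ∀ (l : ℝ) (x : E), 0 < l → x ≠ 0 → f (l • x) = f x)
    (hmean : ∫ ω : sphere (0 : E) 1, f ω ∂μ.toSphere = 0) (g : ℝ → 𝕜) :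
    ∫ x, f x * g ‖x‖ ∂μ = 0 :=
  calc ∫ x, f x * g ‖x‖ ∂μ
      = ∫ x : ({0}ᶜ : Set E), f x * g ‖(x : E)‖ ∂μ.comap Subtype.val := by
        rw [integral_subtype_comap (measurableSet_singleton _).compl (fun x => f x * g ‖x‖),
          restrict_compl_singleton]
    _ = ∫ p : sphere (0 : E) 1 × Ioi (0 : ℝ), f p.1 * g p.2
          ∂μ.toSphere.prod (.volumeIoiPow (Module.finrank ℝ E - 1)) := by
        rw [← μ.measurePreserving_homeomorphUnitSphereProd.integral_comp
          (Homeomorph.measurableEmbedding _)]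
        refine integral_congr_ae (.of_forall fun x => ?_)
        simp only [homeomorphUnitSphereProd_apply_fst_coe, homeomorphUnitSphereProd_apply_snd_coe,
          hf _ _ (inv_pos.2 (norm_pos_iff.2 x.2)) x.2]
    _ = 0 := by
        rw [integral_prod_mul (fun ω : sphere (0 : E) 1 => f ω) (fun r : Ioi (0 : ℝ) => g r),
          hmean, zero_mul]

lemma integrable_and_integral_indicator_inv_pow_norm {R : ℝ} (hR : 0 ≤ R) :
    Integrable (fun x => (Iic R).indicator (fun s => (s ^ (Module.finrank ℝ E - 1))⁻¹) ‖x‖) μ ∧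
    ∫ x, (Iic R).indicator (fun s => (s ^ (Module.finrank ℝ E - 1))⁻¹) ‖x‖ ∂μ
      = μ.toSphere.real univ * R := by
  have hradial : EqOn (fun s => s ^ (Module.finrank ℝ E - 1) •
      (Iic R).indicator (fun s => (s ^ (Module.finrank ℝ E - 1))⁻¹) s) ((Ioc 0 R).indicator 1)
      (Ioi 0) := by
    intro s (hs : 0 < s)
    by_cases hsR : s ≤ R
    · simp [hsR, hs, hs.ne']
    · simp [hsR]
  have hone : Integrable ((Ioc (0 : ℝ) R).indicator 1) :=
    (integrable_indicator_iff measurableSet_Ioc).2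
      (integrableOn_const (C := (1 : ℝ)) measure_Ioc_lt_top.ne)
  constructor
  · rw [integrable_fun_norm_addHaar, integrableOn_congr_fun hradial measurableSet_Ioi]
    exact hone.integrableOn
  · rw [integral_fun_norm_addHaar, setIntegral_congr_fun measurableSet_Ioi hradial,
      setIntegral_indicator measurableSet_Ioc, inter_eq_right.2 Ioc_subset_Ioi_self, Pi.one_def,
      setIntegral_const, Real.volume_real_Ioc_of_le hR, nsmul_eq_mul, smul_eq_mul, smul_eq_mul,
      sub_zero, mul_one, μ.toSphere_real_apply_univ, mul_assoc]

end Polar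

lemma tendsto_setIntegral_lt_nhdsGT_zero {α F : Type*} [MeasurableSpace α] {μ : Measure α}
    [NormedAddCommGroup F] [NormedSpace ℝ F] {ρ : α → ℝ} (hρ : Measurable ρ)
    (hpos : ∀ᵐ x ∂μ, 0 < ρ x) {f : α → F} (hf : Integrable f μ) :
    Tendsto (fun ε => ∫ x in {x | ε < ρ x}, f x ∂μ) (𝓝[>] 0) (𝓝 (∫ x, f x ∂μ)) := by
  simp_rw [← integral_indicator (measurableSet_lt measurable_const hρ)]
  refine tendsto_integral_filter_of_dominated_convergence (fun x => ‖f x‖)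
    (.of_forall fun ε => hf.aestronglyMeasurable.indicator (measurableSet_lt measurable_const hρ))
    (.of_forall fun ε => .of_forall fun x => norm_indicator_le_norm_self _ _) hf.norm ?_
  filter_upwards [hpos] with x hx
  refine tendsto_const_nhds.congr' ?_
  filter_upwards [Ioo_mem_nhdsGT hx] with ε hε
  exact (indicator_of_mem (show x ∈ {x | ε < ρ x} from hε.2) f).symm

section Kernel

variable {n : ℕ} {Ω : (Fin n → ℂ) → ℂ} {B t : ℝ}

local notation "ℝ²ⁿ" => EuclideanSpace ℝ (Fin (n + n))

lemma integral_mul_fun_zNorm_eq_zero [NeZero n]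
    (hhom : ∀ (l : ℝ) (z : Fin n → ℂ), 0 < l → z ≠ 0 → Ω (l • z) = Ω z)
    (hmean : ∫ ω : sphere (0 : ℝ²ⁿ) 1, Ω (toC n ω) ∂(volume : Measure ℝ²ⁿ).toSphere = 0)
    (g : ℝ → ℂ) : ∫ z, Ω z * g (zNorm z) = 0 := by
  rw [← integral_comp_toC]
  simp_rw [zNorm_toC]
  refine integral_mul_fun_norm_eq_zero volume (f := fun x => Ω (toC n x))
    (fun l x hl hx => ?_) hmean g
  have hxC : toC n x ≠ 0 := fun h =>
    (norm_pos_iff.2 hx).ne' (by rw [← zNorm_toC, h]; simp [zNorm, eSq])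
  rw [toC_smul, hhom l _ hl hxC]

lemma integrable_and_integral_indicator_inv_pow_zNorm [NeZero n] {R : ℝ} (hR : 0 ≤ R) :
    Integrable (fun z : Fin n → ℂ => (Iic R).indicator (fun s => (s ^ (n + n - 1))⁻¹) (zNorm z)) ∧
    ∫ z : Fin n → ℂ, (Iic R).indicator (fun s => (s ^ (n + n - 1))⁻¹) (zNorm z)
      = (volume : Measure ℝ²ⁿ).toSphere.real univ * R := by
  have h := integrable_and_integral_indicator_inv_pow_norm (volume : Measure ℝ²ⁿ) hR
  rw [finrank_euclideanSpace_fin] at h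
  rw [← integrable_comp_toC_iff, ← integral_comp_toC]
  simp_rw [zNorm_toC]
  exact h

lemma mixedK_eq_mul_radial (z : Fin n → ℂ) :
    mixedK n Ω z t
      = Ω z * (((zNorm z ^ (2 * n) : ℝ) : ℂ)⁻¹ * (((zNorm z ^ 2 : ℝ) : ℂ) + t * I)⁻¹) := by
  rw [mixedK, mul_assoc, zNorm_sq]

lemma norm_mixedK_le (hB : ∀ z, ‖Ω z‖ ≤ B) (ht : t ≠ 0) (z : Fin n → ℂ) :
    ‖mixedK n Ω z t‖ ≤ B * (zNorm z ^ (2 * n))⁻¹ * |t|⁻¹ := by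
  have hB0 : 0 ≤ B := (norm_nonneg _).trans (hB 0)
  have him : |t| ≤ ‖((eSq z : ℝ) : ℂ) + t * I‖ := by
    simpa using abs_im_le_norm (((eSq z : ℝ) : ℂ) + t * I)
  rw [mixedK, norm_mul, norm_mul, norm_inv, norm_inv, norm_real, Real.norm_of_nonneg
    (pow_nonneg (zNorm_nonneg z) _)]
  have hpow : 0 ≤ (zNorm z ^ (2 * n))⁻¹ := inv_nonneg.2 (pow_nonneg (zNorm_nonneg z) _)
  exact mul_le_mul (mul_le_mul_of_nonneg_right (hB z) hpow) (inv_anti₀ (abs_pos.2 ht) him)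
    (by positivity) (mul_nonneg hB0 hpow)

lemma aestronglyMeasurable_mixedK [NeZero n] (hΩc : ContinuousOn Ω {z | z ≠ 0}) :
    AEStronglyMeasurable (fun z => mixedK n Ω z t) := by
  have hΩ : AEStronglyMeasurable Ω := by
    simpa only [restrict_compl_singleton] using ContinuousOn.aestronglyMeasurable
      (μ := volume) (s := {0}ᶜ) hΩc (measurableSet_singleton (0 : Fin n → ℂ)).compl
  have hpow : Measurable fun z : Fin n → ℂ => ((zNorm z ^ (2 * n) : ℝ) : ℂ)⁻¹ := by fun_prop
  have hres : Measurable fun z : Fin n → ℂ => (((eSq z : ℝ) : ℂ) + t * I)⁻¹ := by fun_prop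
  exact (hΩ.mul hpow.aestronglyMeasurable).mul hres.aestronglyMeasurable

lemma setIntegral_mixedK_preimage_zNorm_eq_zero [NeZero n]
    (hhom : ∀ (l : ℝ) (z : Fin n → ℂ), 0 < l → z ≠ 0 → Ω (l • z) = Ω z)
    (hmean : ∫ ω : sphere (0 : ℝ²ⁿ) 1, Ω (toC n ω) ∂(volume : Measure ℝ²ⁿ).toSphere = 0)
    {A : Set ℝ} (hA : MeasurableSet A) :
    ∫ z in zNorm ⁻¹' A, mixedK n Ω z t = 0 := by
  rw [← integral_indicator (measurable_zNorm hA)]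
  refine (integral_congr_ae (.of_forall fun z => ?_)).trans (integral_mul_fun_zNorm_eq_zero hhom
    hmean (A.indicator fun s => ((s ^ (2 * n) : ℝ) : ℂ)⁻¹ * (((s ^ 2 : ℝ) : ℂ) + t * I)⁻¹))
  by_cases hz : zNorm z ∈ A
  · simp [hz, mixedK_eq_mul_radial]
  · simp [hz]

lemma integrableOn_mixedK_annulus [NeZero n] (hΩc : ContinuousOn Ω {z | z ≠ 0})
    (hB : ∀ z, ‖Ω z‖ ≤ B) (ht : t ≠ 0) {ε : ℝ} (hε : 0 < ε) (R : ℝ) :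
    IntegrableOn (fun z => mixedK n Ω z t) (zNorm ⁻¹' Ioc ε R) := by
  have hfin : (volume : Measure (Fin n → ℂ)) (zNorm ⁻¹' Ioc ε R) ≠ ⊤ := by
    refine ((measure_mono fun z hz => ?_).trans_lt
      (measure_closedBall_lt_top (x := 0) (r := R))).ne
    exact mem_closedBall_zero_iff.2 ((norm_le_zNorm z).trans hz.2)
  refine Measure.integrableOn_of_bounded (M := B * (ε ^ (2 * n))⁻¹ * |t|⁻¹) hfin
    (aestronglyMeasurable_mixedK hΩc)
    ((ae_restrict_iff' (measurable_zNorm measurableSet_Ioc)).2 (.of_forall fun z hz => ?_))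
  refine (norm_mixedK_le hB ht z).trans ?_
  gcongr ?_ * ?_ * _
  · exact (norm_nonneg _).trans (hB 0)
  · exact inv_anti₀ (by positivity) (pow_le_pow_left₀ hε.le hz.1.le _)

end Kernel

def truncatedIntegrand (n : ℕ) (Ω : (Fin n → ℂ) → ℂ) (t δ : ℝ) (φ : (Fin n → ℂ) → ℂ) :
    (Fin n → ℂ) → ℂ :=
  {z : Fin n → ℂ | zNorm z ≤ 1 / δ}.indicator fun z => mixedK n Ω z t * (φ (δ • z) - φ 0)

section Truncation

variable {n : ℕ} {Ω : (Fin n → ℂ) → ℂ} {B t δ : ℝ} {φ : (Fin n → ℂ) → ℂ}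

local notation "ℝ²ⁿ" => EuclideanSpace ℝ (Fin (n + n))

lemma norm_truncatedIntegrand_le [NeZero n] (hB : ∀ z, ‖Ω z‖ ≤ B) (ht : t ≠ 0) (hδ : 0 < δ)
    (hφ : LipschitzWith 1 φ) (z : Fin n → ℂ) :
    ‖truncatedIntegrand n Ω t δ φ z‖
      ≤ B * δ / |t| * (Iic (1 / δ)).indicator (fun s => (s ^ (n + n - 1))⁻¹) (zNorm z) := by
  rw [truncatedIntegrand]
  by_cases hz : zNorm z ≤ 1 / δ
  swap
  · rw [indicator_of_notMem (show z ∉ {z : Fin n → ℂ | zNorm z ≤ 1 / δ} from hz),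
      indicator_of_notMem (show zNorm z ∉ Iic (1 / δ) from hz), norm_zero, mul_zero]
  have hφz : ‖φ (δ • z) - φ 0‖ ≤ δ * zNorm z :=
    calc ‖φ (δ • z) - φ 0‖ ≤ ‖δ • z - 0‖ := by
          simpa [dist_eq_norm] using hφ.dist_le_mul (δ • z) 0
      _ ≤ δ * zNorm z := by rw [sub_zero, ← zNorm_smul hδ.le]; exact norm_le_zNorm _
  have hpow : zNorm z * (zNorm z ^ (2 * n))⁻¹ ≤ (zNorm z ^ (n + n - 1))⁻¹ := by
    rcases (zNorm_nonneg z).eq_or_lt with h | h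
    · rw [← h, zero_mul]
      positivity
    · rw [two_mul, ← pow_sub_one_mul (by simp [NeZero.ne n]), mul_inv_rev,
        mul_inv_cancel_left₀ h.ne']
  have hB0 : 0 ≤ B := (norm_nonneg _).trans (hB 0)
  rw [indicator_of_mem (show z ∈ {z : Fin n → ℂ | zNorm z ≤ 1 / δ} from hz),
    indicator_of_mem (show zNorm z ∈ Iic (1 / δ) from hz), norm_mul]
  calc ‖mixedK n Ω z t‖ * ‖φ (δ • z) - φ 0‖
      ≤ B * (zNorm z ^ (2 * n))⁻¹ * |t|⁻¹ * (δ * zNorm z) :=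
        mul_le_mul (norm_mixedK_le hB ht z) hφz (norm_nonneg _)
          ((norm_nonneg _).trans (norm_mixedK_le hB ht z))
    _ = B * δ / |t| * (zNorm z * (zNorm z ^ (2 * n))⁻¹) := by ring
    _ ≤ B * δ / |t| * (zNorm z ^ (n + n - 1))⁻¹ :=
        mul_le_mul_of_nonneg_left hpow (div_nonneg (mul_nonneg hB0 hδ.le) (abs_nonneg t))

lemma integrable_truncatedIntegrand_and_norm_integral_le [NeZero n]
    (hΩc : ContinuousOn Ω {z | z ≠ 0}) (hB : ∀ z, ‖Ω z‖ ≤ B) (ht : t ≠ 0) (hδ : 0 < δ)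
    (hφ : LipschitzWith 1 φ) :
    Integrable (truncatedIntegrand n Ω t δ φ) ∧
      ‖∫ z, truncatedIntegrand n Ω t δ φ z‖
        ≤ B * (volume : Measure ℝ²ⁿ).toSphere.real univ / |t| := by
  obtain ⟨hint, hval⟩ :=
    integrable_and_integral_indicator_inv_pow_zNorm (n := n) (R := 1 / δ) (by positivity)
  have hmeas : AEStronglyMeasurable (truncatedIntegrand n Ω t δ φ) :=
    ((aestronglyMeasurable_mixedK hΩc).mul
      ((hφ.continuous.comp (continuous_const_smul δ)).sub continuous_const).aestronglyMeasurable)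
      |>.indicator (measurable_zNorm measurableSet_Iic)
  have hbound := Eventually.of_forall (f := ae volume) (norm_truncatedIntegrand_le hB ht hδ hφ)
  refine ⟨(hint.const_mul _).mono' hmeas hbound, ?_⟩
  calc _ ≤ _ := norm_integral_le_of_norm_le (hint.const_mul _) hbound
    _ = B * δ / |t| * ((volume : Measure ℝ²ⁿ).toSphere.real univ * (1 / δ)) := by
        rw [integral_const_mul, hval]
    _ = _ := by field_simp

lemma setIntegral_mixedK_mul_eq_setIntegral_truncatedIntegrand [NeZero n]
    (hΩc : ContinuousOn Ω {z | z ≠ 0}) (hB : ∀ z, ‖Ω z‖ ≤ B)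
    (hhom : ∀ (l : ℝ) (z : Fin n → ℂ), 0 < l → z ≠ 0 → Ω (l • z) = Ω z)
    (hmean : ∫ ω : sphere (0 : ℝ²ⁿ) 1, Ω (toC n ω) ∂(volume : Measure ℝ²ⁿ).toSphere = 0)
    (ht : t ≠ 0) (hδ : 0 < δ) (hsupp : ∀ z : Fin n → ℂ, ¬ zNorm z ≤ 1 → φ z = 0)
    (hint : Integrable (truncatedIntegrand n Ω t δ φ))
    {ε : ℝ} (hε : 0 < ε) :
    ∫ z in {z : Fin n → ℂ | ε < zNorm z}, mixedK n Ω z t * φ (δ • z)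
      = ∫ z in {z : Fin n → ℂ | ε < zNorm z}, truncatedIntegrand n Ω t δ φ z := by
  set A : Set (Fin n → ℂ) := zNorm ⁻¹' Ioc ε (1 / δ)
  have hA : MeasurableSet A := measurable_zNorm measurableSet_Ioc
  have hK : IntegrableOn (fun z => mixedK n Ω z t) A :=
    integrableOn_mixedK_annulus hΩc hB ht hε _
  have hF : IntegrableOn (fun z => mixedK n Ω z t * (φ (δ • z) - φ 0)) A :=
    (hint.integrableOn (s := A)).congr_fun (fun z hz =>
      indicator_of_mem (show z ∈ {z : Fin n → ℂ | zNorm z ≤ 1 / δ} from hz.2) _) hA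
  calc ∫ z in {z | ε < zNorm z}, mixedK n Ω z t * φ (δ • z)
      = ∫ z in A, mixedK n Ω z t * φ (δ • z) := by
        refine setIntegral_eq_of_subset_of_forall_sdiff_eq_zero
          (measurableSet_lt measurable_const measurable_zNorm) (fun z hz => hz.1) fun z hz => ?_
        have hz' : 1 / δ < zNorm z := not_le.1 fun h => hz.2 ⟨hz.1, h⟩
        rw [hsupp _ (by rw [zNorm_smul hδ.le]; exact not_le.2 ((div_lt_iff₀' hδ).1 hz')),
          mul_zero]
    _ = ∫ z in A, (mixedK n Ω z t * (φ (δ • z) - φ 0) + mixedK n Ω z t * φ 0) := by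
        congr with z
        ring
    _ = ∫ z in A, mixedK n Ω z t * (φ (δ • z) - φ 0) := by
        rw [integral_add hF (hK.mul_const _), integral_mul_const,
          setIntegral_mixedK_preimage_zNorm_eq_zero hhom hmean measurableSet_Ioc, zero_mul,
          add_zero]
    _ = _ := by
        rw [truncatedIntegrand,
          setIntegral_indicator (measurableSet_le measurable_zNorm measurable_const)]
        rfl

end Truncation

/-- **Flag cancellation of the mixed kernel in the `z` variable**: if `Ω` is continuous
away from `0`, homogeneous of degree `0`, bounded by `B` and has mean zero on the unit
sphere `S^{2n-1}`, then for `t ≠ 0`, `δ > 0` and every normalized `C¹` bump function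
`φ₂` on `ℂⁿ`, the principal value `lim_{ε→0⁺} ∫_{|z|>ε} K(z,t) φ₂(δz) dz` exists with
modulus `≤ C|t|⁻¹`; equivalently `∫ K(z,t)(φ₂(δz)-φ₂(0)) χ_{|z|≤1/δ} dz` converges
absolutely with modulus `≤ C|t|⁻¹`.  The constant `C` depends only on `n` and `B`. -/
theorem mixed_kernel_cancellation_z (n : ℕ) (hn : 1 ≤ n) (B : ℝ) :
    ∃ C : ℝ, 0 < C ∧
      ∀ Ω : (Fin n → ℂ) → ℂ,
        ContinuousOn Ω {z : Fin n → ℂ | z ≠ 0} → (∀ z, ‖Ω z‖ ≤ B) →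
        (∀ (l : ℝ) (z : Fin n → ℂ), 0 < l → z ≠ 0 → Ω (l • z) = Ω z) →
        (∫ ω : Metric.sphere (0 : EuclideanSpace ℝ (Fin (n + n))) 1,
            Ω (toC n (ω : EuclideanSpace ℝ (Fin (n + n))))
          ∂((volume : Measure (EuclideanSpace ℝ (Fin (n + n)))).toSphere) = 0) →
        ∀ t : ℝ, t ≠ 0 → ∀ δ : ℝ, 0 < δ →
        ∀ φ : (Fin n → ℂ) → ℂ, ContDiff ℝ 1 φ →
          (∀ z : Fin n → ℂ, ¬ zNorm z ≤ 1 → φ z = 0) →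
          (∀ z, ‖φ z‖ ≤ 1) → (∀ z, ‖fderiv ℝ φ z‖ ≤ 1) →
          (∃ L : ℂ,
            Filter.Tendsto
              (fun ε : ℝ => ∫ z in {z : Fin n → ℂ | ε < zNorm z}, mixedK n Ω z t * φ (δ • z))
              (nhdsWithin (0:ℝ) (Set.Ioi 0)) (nhds L) ∧
            ‖L‖ ≤ C / |t|) ∧
          Integrable ({z : Fin n → ℂ | zNorm z ≤ 1/δ}.indicator
            (fun z => mixedK n Ω z t * (φ (δ • z) - φ 0))) volume ∧
          ‖∫ z : Fin n → ℂ, {z : Fin n → ℂ | zNorm z ≤ 1/δ}.indicator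
              (fun z => mixedK n Ω z t * (φ (δ • z) - φ 0)) z‖ ≤ C / |t| := by
  have : NeZero n := ⟨by omega⟩
  have hσ : 0 ≤ (volume : Measure (EuclideanSpace ℝ (Fin (n + n)))).toSphere.real univ :=
    measureReal_nonneg
  refine ⟨|B| * (volume : Measure (EuclideanSpace ℝ (Fin (n + n)))).toSphere.real univ + 1,
    by positivity, ?_⟩
  intro Ω hΩc hB hhom hmean t ht δ hδ φ hφ hsupp _ hφ'
  have hlip : LipschitzWith 1 φ := lipschitzWith_of_nnnorm_fderiv_le
    (hφ.differentiable one_ne_zero) fun z => by exact_mod_cast hφ' z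
  obtain ⟨hint, hbound⟩ := integrable_truncatedIntegrand_and_norm_integral_le hΩc hB ht hδ hlip
  have hC := hbound.trans <| div_le_div_of_nonneg_right
    (le_add_of_le_of_nonneg (mul_le_mul_of_nonneg_right (le_abs_self B) hσ) zero_le_one)
    (abs_nonneg t)
  refine ⟨⟨_, ?_, hC⟩, hint, hC⟩
  have hpos : ∀ᵐ z : Fin n → ℂ, 0 < zNorm z := (volume.ae_ne 0).mono fun z => zNorm_pos
  refine (tendsto_setIntegral_lt_nhdsGT_zero measurable_zNorm hpos hint).congr' ?_
  filter_upwards [self_mem_nhdsWithin] with ε hε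
  exact (setIntegral_mixedK_mul_eq_setIntegral_truncatedIntegrand hΩc hB hhom hmean ht hδ hsupp
    hint hε).symm
end
end

section
/- Let ψ₁, ψ₂ : ℝ → [0,1] be smooth even functions that are identically 1 on [−1/2, 1/2] and supported in (−1/√2, 1/√2). Define ψ(x,y) = y ψ₁(x) ψ₂(y) on ℝ² ≅ C, and define Ω(x,y) = y/√(x²+y²) for (x,y) ≠ (0,0). Then there exists a constant c > 0 (depending on ψ₁, ψ₂) such that for every ζ = (100+ν, ω) ∈ ℝ² with ν² + ω² ≤ 1: |∫_{ℝ²} ψ(η) Ω(ζ − η) dη| ≥ c. In particular, although Ω has mean zero on the unit circle and ψ has integral zero over ℝ², the convolution ψ ∗ Ω does not vanish, and is bounded away from zero, on the ball of radius 1 centered at (100,0). -/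
/-!
By Fubini the integral is `∫ ψ₁(x) I(x) dx` with `I(x) = ∫ y ψ₂(y) Ω(a, ω - y) dy` and
`a = 100 + ν - x ∈ [98, 102]`. Since `y ψ₂(y)` is odd, `I(x) = ∫ ψ₂(y) y (Ω(a, ω - y) - Ω(a, ω)) dy`,
and for such `a` the map `t ↦ Ω(a, t) = t / √(a² + t²)` has slope at least `1/120` on `[-2, 2]`, so
the integrand is at most `-ψ₂(y) y² / 120`. As `0 ≤ ψ₂` and `ψ₂ = 1` on `[-1/2, 1/2]`, this gives
`I(x) ≤ -1/1440` wherever `ψ₁(x) ≠ 0`, and the same cutoff argument in `x` bounds the whole integral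
by `-1/1440`.
-/

open MeasureTheory
open scoped ENNReal

noncomputable section

/-- `Ω(x,y) = y/√(x²+y²)`, homogeneous of degree `0` with mean zero on the unit circle. -/
def OmegaFn (p : ℝ × ℝ) : ℝ := p.2 / Real.sqrt (p.1 ^ 2 + p.2 ^ 2)

open Set

lemma measurable_omegaFn : Measurable OmegaFn := by
  unfold OmegaFn; fun_prop

lemma abs_omegaFn_le_one (p : ℝ × ℝ) : |OmegaFn p| ≤ 1 := by
  rw [OmegaFn, abs_div, abs_of_nonneg (Real.sqrt_nonneg _)]
  exact div_le_one_of_le₀ (Real.abs_le_sqrt (by nlinarith)) (Real.sqrt_nonneg _)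

lemma hasDerivAt_omegaFn_snd {a : ℝ} (ha : a ≠ 0) (t : ℝ) :
    HasDerivAt (fun t => OmegaFn (a, t)) (a ^ 2 / Real.sqrt (a ^ 2 + t ^ 2) ^ 3) t := by
  have hpos : 0 < a ^ 2 + t ^ 2 := by positivity
  have hr : 0 < Real.sqrt (a ^ 2 + t ^ 2) := Real.sqrt_pos.mpr hpos
  have hsq : HasDerivAt (fun t => a ^ 2 + t ^ 2) (2 * t) t := by
    simpa using (hasDerivAt_pow 2 t).const_add (a ^ 2)
  have hsqrt := hsq.sqrt hpos.ne'
  refine ((hasDerivAt_id' t).div hsqrt hr.ne').congr_deriv ?_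
  have hr2 := Real.sq_sqrt hpos.le
  field_simp
  rw [hr2]
  ring

lemma inv_120_le_deriv_omegaFn_snd {a t : ℝ} (ha : 98 ≤ a) (ha' : a ≤ 102) (ht : |t| ≤ 2) :
    1 / 120 ≤ a ^ 2 / Real.sqrt (a ^ 2 + t ^ 2) ^ 3 := by
  have ht2 : t ^ 2 ≤ 4 := by nlinarith [abs_le.mp ht, sq_abs t]
  have hr : Real.sqrt (a ^ 2 + t ^ 2) ≤ 103 := Real.sqrt_le_iff.mpr ⟨by norm_num, by nlinarith⟩
  have hr3 : Real.sqrt (a ^ 2 + t ^ 2) ^ 3 ≤ 103 ^ 3 := by gcongr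
  rw [div_le_div_iff₀ (by norm_num) (by positivity)]
  nlinarith

lemma sq_div_le_mul_sub_omegaFn {a s t : ℝ} (ha : 98 ≤ a) (ha' : a ≤ 102)
    (hs : |s| ≤ 2) (ht : |t| ≤ 2) :
    (t - s) ^ 2 / 120 ≤ (t - s) * (OmegaFn (a, t) - OmegaFn (a, s)) := by
  wlog hst : s ≤ t generalizing s t
  · nlinarith [this ht hs (by linarith)]
  have hderiv := hasDerivAt_omegaFn_snd (by linarith : a ≠ 0)
  have hslope : 1 / 120 * (t - s) ≤ OmegaFn (a, t) - OmegaFn (a, s) :=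
    (convex_Icc (-2 : ℝ) 2).mul_sub_le_image_sub_of_le_deriv
      (fun x _ => (hderiv x).continuousAt.continuousWithinAt)
      (fun x _ => (hderiv x).differentiableAt.differentiableWithinAt)
      (fun x hx => by
        rw [interior_Icc] at hx
        rw [(hderiv x).deriv]
        exact inv_120_le_deriv_omegaFn_snd ha ha' (abs_le.mpr ⟨hx.1.le, hx.2.le⟩))
      s (abs_le.mp hs) t (abs_le.mp ht) hst
  nlinarith

lemma integral_mul_le_setIntegral_of_le {α : Type*} [MeasurableSpace α] {μ : Measure α}
    {φ h k : α → ℝ} {s : Set α} (hs : MeasurableSet s) (hφ : ∀ x, 0 ≤ φ x)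
    (hφs : ∀ x ∈ s, φ x = 1) (hhk : ∀ x, φ x ≠ 0 → h x ≤ k x) (hk : ∀ x, k x ≤ 0)
    (hφh : Integrable (fun x => φ x * h x) μ) (hks : IntegrableOn k s μ) :
    ∫ x, φ x * h x ∂μ ≤ ∫ x in s, k x ∂μ := by
  rw [← integral_indicator hs]
  refine integral_mono hφh ((integrable_indicator_iff hs).mpr hks) fun x => ?_
  by_cases hx : x ∈ s
  · simpa [hx, hφs x hx] using hhk x (by simp [hφs x hx])
  · rw [indicator_of_notMem hx]
    by_cases hφx : φ x = 0
    · simp [hφx]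
    · nlinarith [hhk x hφx, hk x, hφ x]

lemma integral_mul_eq_zero_of_even {ψ : ℝ → ℝ} (hψ : ∀ x, ψ (-x) = ψ x) :
    ∫ y, y * ψ y = 0 := by
  have h := integral_neg_eq_self (fun y => y * ψ y) volume
  simp only [hψ, neg_mul, integral_neg] at h
  linarith

lemma abs_le_one_of_ne_zero {ψ : ℝ → ℝ}
    (hψ : ∀ x : ℝ, x ∉ Ioo (-(1 / Real.sqrt 2)) (1 / Real.sqrt 2) → ψ x = 0) {x : ℝ}
    (hx : ψ x ≠ 0) : |x| ≤ 1 := by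
  have h : 1 / Real.sqrt 2 ≤ 1 := by
    rw [div_le_one (by positivity)]; exact Real.one_lt_sqrt_two.le
  by_contra hx1
  exact hx (hψ x fun hmem => hx1 (abs_le.mpr ⟨by linarith [hmem.1], by linarith [hmem.2]⟩))

lemma integrable_of_continuous_of_abs_le_one {ψ : ℝ → ℝ} (hc : Continuous ψ)
    (hψ : ∀ x, ψ x ≠ 0 → |x| ≤ 1) : Integrable ψ :=
  hc.integrable_of_hasCompactSupport <| HasCompactSupport.intro (isCompact_Icc (a := -1) (b := 1))
    fun x hx => by_contra fun h => hx (abs_le.mp (hψ x h))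

lemma setIntegral_Icc_neg_sq_div_eq :
    ∫ y in Icc (-(1 / 2) : ℝ) (1 / 2), -(y ^ 2 / 120) = -(1 / 1440) := by
  rw [integral_Icc_eq_integral_Ioc, ← intervalIntegral.integral_of_le (by norm_num)]
  simp only [intervalIntegral.integral_neg, intervalIntegral.integral_div, integral_pow]
  norm_num

lemma integral_mul_omegaFn_le {ψ : ℝ → ℝ} (hc : Continuous ψ) (heven : ∀ x, ψ (-x) = ψ x)
    (hnonneg : ∀ x, 0 ≤ ψ x) (hone : ∀ x ∈ Icc (-(1 / 2) : ℝ) (1 / 2), ψ x = 1)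
    (hsupp : ∀ x, ψ x ≠ 0 → |x| ≤ 1) {a ω : ℝ} (ha : 98 ≤ a) (ha' : a ≤ 102) (hω : |ω| ≤ 1) :
    ∫ y, y * ψ y * OmegaFn (a, ω - y) ≤ -(1 / 1440) := by
  have hyψ : Integrable fun y => y * ψ y :=
    integrable_of_continuous_of_abs_le_one (by fun_prop)
      fun y hy => hsupp y (right_ne_zero_of_mul hy)
  have hΩ : Integrable fun y => y * ψ y * OmegaFn (a, ω - y) :=
    hyψ.mul_bdd (c := 1) (measurable_omegaFn.comp (by fun_prop)).aestronglyMeasurable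
      (.of_forall fun y => abs_omegaFn_le_one _)
  have hdiff : Integrable fun y => ψ y * (y * (OmegaFn (a, ω - y) - OmegaFn (a, ω))) :=
    (hΩ.sub (hyψ.mul_const (OmegaFn (a, ω)))).congr
      (.of_forall fun y => by simp only [Pi.sub_apply]; ring)
  have hshift : ∫ y, y * ψ y * OmegaFn (a, ω - y) =
      ∫ y, ψ y * (y * (OmegaFn (a, ω - y) - OmegaFn (a, ω))) := by
    rw [← sub_zero (∫ y, _), ← mul_zero (OmegaFn (a, ω)), ← integral_mul_eq_zero_of_even heven,
      ← integral_const_mul, ← integral_sub hΩ (hyψ.const_mul _)]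
    congr 1; ext y; ring
  rw [hshift, ← setIntegral_Icc_neg_sq_div_eq]
  refine integral_mul_le_setIntegral_of_le measurableSet_Icc hnonneg hone (fun y hy => ?_)
    (fun y => by nlinarith [sq_nonneg y]) hdiff
    (by fun_prop : Continuous fun y : ℝ => -(y ^ 2 / 120)).integrableOn_Icc
  · have hy1 := abs_le.mp (hsupp y hy)
    have hω1 := abs_le.mp hω
    have := sq_div_le_mul_sub_omegaFn (s := ω) (t := ω - y) ha ha'
      (abs_le.mpr ⟨by linarith, by linarith⟩) (abs_le.mpr ⟨by linarith, by linarith⟩)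
    nlinarith

lemma integrable_weight_mul_omegaFn {ψ₁ ψ₂ : ℝ → ℝ} (h₁ : Integrable ψ₁)
    (h₂ : Integrable fun y => y * ψ₂ y) (p q : ℝ) :
    Integrable (fun η : ℝ × ℝ => ψ₁ η.1 * (η.2 * ψ₂ η.2) * OmegaFn (p - η.1, q - η.2))
      (volume.prod volume) :=
  (h₁.mul_prod h₂).mul_bdd (c := 1) (measurable_omegaFn.comp (by fun_prop)).aestronglyMeasurable
    (.of_forall fun η => abs_omegaFn_le_one _)

lemma integrable_mul_integral_omegaFn {ψ₁ ψ₂ : ℝ → ℝ} (h₁ : Integrable ψ₁)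
    (h₂ : Integrable fun y => y * ψ₂ y) (p q : ℝ) :
    Integrable fun x => ψ₁ x * ∫ y, y * ψ₂ y * OmegaFn (p - x, q - y) :=
  (integrable_weight_mul_omegaFn h₁ h₂ p q).integral_prod_left.congr <| .of_forall fun x => by
    simp only [← integral_const_mul, mul_assoc]

lemma integral_weight_mul_omegaFn_eq_iterated {ψ₁ ψ₂ : ℝ → ℝ} (h₁ : Integrable ψ₁)
    (h₂ : Integrable fun y => y * ψ₂ y) (p q : ℝ) :
    ∫ η : ℝ × ℝ, (η.2 * ψ₁ η.1 * ψ₂ η.2) * OmegaFn (p - η.1, q - η.2) =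
      ∫ x, ψ₁ x * ∫ y, y * ψ₂ y * OmegaFn (p - x, q - y) := by
  rw [Measure.volume_eq_prod]
  simp_rw [← integral_const_mul]
  convert integral_prod _ (integrable_weight_mul_omegaFn h₁ h₂ p q) using 1 <;>
    simp only [mul_assoc, mul_left_comm, mul_comm]

theorem convolution_bounded_below_general (ψ₁ ψ₂ : ℝ → ℝ)
    (h₁smooth : ContDiff ℝ (⊤ : ℕ∞) ψ₁) (h₂smooth : ContDiff ℝ (⊤ : ℕ∞) ψ₂)
    (h₂even : ∀ x, ψ₂ (-x) = ψ₂ x)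
    (h₁range : ∀ x, 0 ≤ ψ₁ x ∧ ψ₁ x ≤ 1) (h₂range : ∀ x, 0 ≤ ψ₂ x ∧ ψ₂ x ≤ 1)
    (h₁one : ∀ x ∈ Set.Icc (-(1/2) : ℝ) (1/2), ψ₁ x = 1)
    (h₂one : ∀ x ∈ Set.Icc (-(1/2) : ℝ) (1/2), ψ₂ x = 1)
    (h₁supp : ∀ x : ℝ, x ∉ Set.Ioo (-(1/Real.sqrt 2)) (1/Real.sqrt 2) → ψ₁ x = 0)
    (h₂supp : ∀ x : ℝ, x ∉ Set.Ioo (-(1/Real.sqrt 2)) (1/Real.sqrt 2) → ψ₂ x = 0) :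
    ∃ c : ℝ, 0 < c ∧ ∀ ν ω : ℝ, ν ^ 2 + ω ^ 2 ≤ 1 →
      c ≤ |∫ η : ℝ × ℝ,
              (η.2 * ψ₁ η.1 * ψ₂ η.2) * OmegaFn (100 + ν - η.1, ω - η.2)| := by
  refine ⟨1 / 1440, by norm_num, fun ν ω hνω => ?_⟩
  have hν : |ν| ≤ 1 := abs_le.mpr ⟨by nlinarith, by nlinarith⟩
  have hω : |ω| ≤ 1 := abs_le.mpr ⟨by nlinarith, by nlinarith⟩
  have h₁ne (x : ℝ) (hx : ψ₁ x ≠ 0) : |x| ≤ 1 := abs_le_one_of_ne_zero h₁supp hx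
  have h₂ne (y : ℝ) (hy : ψ₂ y ≠ 0) : |y| ≤ 1 := abs_le_one_of_ne_zero h₂supp hy
  have hyψ₂ : Integrable fun y => y * ψ₂ y :=
    integrable_of_continuous_of_abs_le_one (continuous_id.mul h₂smooth.continuous)
      fun y hy => h₂ne y (right_ne_zero_of_mul hy)
  have hinner (x : ℝ) (hx : ψ₁ x ≠ 0) :
      ∫ y, y * ψ₂ y * OmegaFn (100 + ν - x, ω - y) ≤ -(1 / 1440) := by
    obtain ⟨hx₁, hx₂⟩ := abs_le.mp (h₁ne x hx)
    obtain ⟨hν₁, hν₂⟩ := abs_le.mp hν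
    exact integral_mul_omegaFn_le h₂smooth.continuous h₂even (fun y => (h₂range y).1) h₂one h₂ne
      (by linarith) (by linarith) hω
  have hψ₁ : Integrable ψ₁ := integrable_of_continuous_of_abs_le_one h₁smooth.continuous h₁ne
  have hbound : ∫ x, ψ₁ x * ∫ y, y * ψ₂ y * OmegaFn (100 + ν - x, ω - y) ≤ -(1 / 1440) :=
    calc _ ≤ ∫ _ in Icc (-(1 / 2) : ℝ) (1 / 2), -(1 / 1440 : ℝ) :=
          integral_mul_le_setIntegral_of_le measurableSet_Icc (fun x => (h₁range x).1) h₁one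
            hinner (fun _ => by norm_num) (integrable_mul_integral_omegaFn hψ₁ hyψ₂ _ _)
            (integrableOn_const (by simp))
      _ = -(1 / 1440) := by norm_num
  rw [integral_weight_mul_omegaFn_eq_iterated hψ₁ hyψ₂]
  exact le_abs.mpr (Or.inr (by linarith))

/-- **Failure of joint cancellation**:  for smooth even cutoffs `ψ₁, ψ₂` that are `1` on
`[-1/2,1/2]` and supported in `(-1/√2, 1/√2)`, setting `ψ(x,y) = y ψ₁(x) ψ₂(y)`, the
convolution `ψ ∗ Ω` is bounded away from zero on the unit ball centered at `(100,0)`: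
there is `c > 0` with `|∫ ψ(η) Ω(ζ-η) dη| ≥ c` for all `ζ = (100+ν, ω)`, `ν²+ω² ≤ 1` —
even though `∫ ψ = 0` and `Ω` has mean zero on the unit circle. -/
theorem convolution_bounded_below (ψ₁ ψ₂ : ℝ → ℝ)
    (h₁smooth : ContDiff ℝ (⊤ : ℕ∞) ψ₁) (h₂smooth : ContDiff ℝ (⊤ : ℕ∞) ψ₂)
    (h₁even : ∀ x, ψ₁ (-x) = ψ₁ x) (h₂even : ∀ x, ψ₂ (-x) = ψ₂ x)
    (h₁range : ∀ x, 0 ≤ ψ₁ x ∧ ψ₁ x ≤ 1) (h₂range : ∀ x, 0 ≤ ψ₂ x ∧ ψ₂ x ≤ 1)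
    (h₁one : ∀ x ∈ Set.Icc (-(1/2) : ℝ) (1/2), ψ₁ x = 1)
    (h₂one : ∀ x ∈ Set.Icc (-(1/2) : ℝ) (1/2), ψ₂ x = 1)
    (h₁supp : ∀ x : ℝ, x ∉ Set.Ioo (-(1/Real.sqrt 2)) (1/Real.sqrt 2) → ψ₁ x = 0)
    (h₂supp : ∀ x : ℝ, x ∉ Set.Ioo (-(1/Real.sqrt 2)) (1/Real.sqrt 2) → ψ₂ x = 0) :
    ∃ c : ℝ, 0 < c ∧ ∀ ν ω : ℝ, ν ^ 2 + ω ^ 2 ≤ 1 →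
      c ≤ |∫ η : ℝ × ℝ,
              (η.2 * ψ₁ η.1 * ψ₂ η.2) * OmegaFn (100 + ν - η.1, ω - η.2)| :=
  convolution_bounded_below_general ψ₁ ψ₂ h₁smooth h₂smooth h₂even h₁range h₂range h₁one h₂one
    h₁supp h₂supp
end
end
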